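/- arXiv:2404.14685 — 7 statements merged into one kernel-verified Lean document; each statement's English description precedes it below -/
import Mathlib

section
/- Let H be a complex Hilbert space, S a set, and K : S × S → B(H) a positive definite operator-valued kernel. Then there exist a complex Hilbert space L and a family of bounded linear operators V_s : H → L (s ∈ S) such that K(s,t) = V_s* ∘ V_t for all s, t ∈ S. -/
/-!
A positive definite kernel is Hermitian: positivity of the `1 × 1` and `2 × 2` sums, applied to
`b` and to `I • b`, polarizes to `⟪K t s a, b⟫ = ⟪a, K s t b⟫`. Hence `K` is a positive
semidefinite operator matrix, and Moore's construction `RKHS.OfKernel` realizes it as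
`(kerFun s)† ∘ kerFun t` on the completion of the pre-Hilbert space spanned by the kernel
functions.
-/

open scoped InnerProductSpace ComplexOrder

section

variable {H : Type*} [NormedAddCommGroup H] [InnerProductSpace ℂ H] {S : Type*}

def IsPositiveDefiniteKernel (K : S → S → H →L[ℂ] H) : Prop :=
  ∀ (n : ℕ) (s : Fin n → S) (a : Fin n → H), 0 ≤ ∑ i, ∑ j, ⟪a i, K (s i) (s j) (a j)⟫_ℂ

namespace IsPositiveDefiniteKernel

variable {K : S → S → H →L[ℂ] H}

theorem sum_finset_nonneg (hK : IsPositiveDefiniteKernel K) (u : Finset S) (a : S → H) :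
    0 ≤ ∑ s ∈ u, ∑ t ∈ u, ⟪a s, K s t (a t)⟫_ℂ := by
  let e := u.equivFin
  calc 0 ≤ _ := hK u.card (fun i => e.symm i) (fun i => a (e.symm i))
    _ = ∑ s : u, ∑ t : u, ⟪a s, K s t (a t)⟫_ℂ :=
      Fintype.sum_equiv e.symm _ (fun s => ∑ t : u, ⟪a s, K s t (a t)⟫_ℂ) fun i =>
        Fintype.sum_equiv e.symm _ _ fun j => rfl
    _ = _ := by
      rw [Finset.sum_coe_sort u fun s => ∑ t : u, ⟪a s, K s t (a t)⟫_ℂ]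
      exact Finset.sum_congr rfl fun s _ => Finset.sum_coe_sort u fun t => ⟪a s, K s t (a t)⟫_ℂ

theorem inner_apply_swap (hK : IsPositiveDefiniteKernel K) (s t : S) (a b : H) :
    ⟪K t s a, b⟫_ℂ = ⟪a, K s t b⟫_ℂ := by
  have im_eq : ∀ b', (⟪a, K s t b'⟫_ℂ + ⟪b', K t s a⟫_ℂ).im = 0 := by
    intro b'
    have h2 := (Complex.nonneg_iff.1 (hK 2 ![s, t] ![a, b'])).2
    have hs := (Complex.nonneg_iff.1 (hK 1 ![s] ![a])).2
    have ht := (Complex.nonneg_iff.1 (hK 1 ![t] ![b'])).2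
    simp only [Fin.sum_univ_two, Fin.sum_univ_one, Matrix.cons_val_zero, Matrix.cons_val_one,
      Complex.add_im] at h2 hs ht
    simp only [Complex.add_im]
    linarith
  have h := im_eq b
  have hI := im_eq (Complex.I • b)
  simp only [map_smul, inner_smul_left, inner_smul_right, Complex.conj_I, Complex.add_im,
    Complex.mul_im, Complex.neg_re, Complex.neg_im, Complex.I_re, Complex.I_im] at h hI
  rw [← inner_conj_symm]
  apply Complex.ext <;> simp only [Complex.conj_re, Complex.conj_im] <;> linarith

theorem isHermitian [CompleteSpace H] (hK : IsPositiveDefiniteKernel K) :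
    (Matrix.of K).IsHermitian :=
  Matrix.IsHermitian.ext fun s t => by
    rw [Matrix.of_apply, Matrix.of_apply, ContinuousLinearMap.star_eq_adjoint]
    exact ((ContinuousLinearMap.eq_adjoint_iff _ _).2 (hK.inner_apply_swap t s)).symm

theorem posSemidef [CompleteSpace H] (hK : IsPositiveDefiniteKernel K) :
    (Matrix.of K).PosSemidef := by
  have posSemidef_iff := (RKHS.posSemidef_tfae (K := Matrix.of K)).out 0 2
  refine posSemidef_iff.mpr ⟨hK.isHermitian, fun v => ?_⟩
  have hsum : (v.sum fun s a => v.sum fun t b => ⟪Matrix.of K t s a, b⟫_ℂ) =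
      ∑ s ∈ v.support, ∑ t ∈ v.support, ⟪v s, K s t (v t)⟫_ℂ := by
    simp only [Finsupp.sum, Matrix.of_apply, hK.inner_apply_swap]
  rw [hsum, RCLike.re_to_complex]
  exact (Complex.nonneg_iff.1 (hK.sum_finset_nonneg v.support v)).1

end IsPositiveDefiniteKernel

end

/-- Every positive definite operator-valued kernel `K : S × S → B(H)` factors
as `K(s,t) = V_s* ∘ V_t` for a family of bounded operators `V_s : H → L` into some
complex Hilbert space `L`. -/
theorem stmt_2 {H : Type*} [NormedAddCommGroup H] [InnerProductSpace ℂ H] [CompleteSpace H]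
    {S : Type*} (K : S → S → H →L[ℂ] H)
    (hK : ∀ (n : ℕ) (s : Fin n → S) (a : Fin n → H),
      0 ≤ ∑ i, ∑ j, (⟪a i, K (s i) (s j) (a j)⟫_ℂ)) :
    ∃ (L : Type (max u_1 u_2)) (_ : NormedAddCommGroup L) (_ : InnerProductSpace ℂ L)
      (_ : CompleteSpace L) (V : S → H →L[ℂ] L),
      ∀ s t, K s t = (ContinuousLinearMap.adjoint (V s)).comp (V t) := by
  have : Fact (Matrix.of K).PosSemidef := ⟨IsPositiveDefiniteKernel.posSemidef hK⟩
  refine ⟨RKHS.OfKernel (Matrix.of K), inferInstance, inferInstance, inferInstance,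
    RKHS.kerFun _, fun s t => ?_⟩
  rw [← RKHS.kernel_apply, RKHS.OfKernel.kernel_ofKernel, Matrix.of_apply]
end

section
/- Let H be a complex Hilbert space and S a set. Suppose L and L' are complex Hilbert spaces with families of bounded linear operators V_s : H → L and V'_s : H → L' (s ∈ S) such that V_s* ∘ V_t = V'_s* ∘ V'_t for all s, t ∈ S, and suppose both factorizations are minimal: L equals the closed linear span of {V_s a : s ∈ S, a ∈ H} and L' equals the closed linear span of {V'_s a : s ∈ S, a ∈ H}. Then there exists a unitary (linear isometric isomorphism) U : L → L' such that U(V_s a) = V'_s a for all s ∈ S and a ∈ H. -/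
/-!
Both factorizations have the same Gram data: `⟪V s a, V t b⟫ = ⟪a, (V s)† (V t) b⟫` only depends on
the kernel. Hence `∑ cᵢ V sᵢ aᵢ ↦ ∑ cᵢ V' sᵢ aᵢ` is a well-defined isometry between the spans, and
by minimality these spans are dense, so it extends to a unitary `L ≃ₗᵢ L'`.
-/

open Finsupp Submodule
open scoped InnerProductSpace

theorem denseRange_liftQ_linearCombination {R ι M : Type*} [Ring R] [TopologicalSpace R]
    [AddCommGroup M] [Module R M] [TopologicalSpace M] [ContinuousAdd M]
    [ContinuousConstSMul R M] {v : ι → M} (hv : (span R (Set.range v)).topologicalClosure = ⊤)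
    {p : Submodule R (ι →₀ R)} (hp : p ≤ LinearMap.ker (linearCombination R v)) :
    DenseRange (p.liftQ (linearCombination R v) hp) := by
  rw [DenseRange, ← LinearMap.coe_range, range_liftQ, range_linearCombination]
  exact dense_iff_topologicalClosure_eq_top.mpr hv

section GramFamily

variable {𝕜 ι E F : Type*} [RCLike 𝕜]
  [NormedAddCommGroup E] [InnerProductSpace 𝕜 E] [NormedAddCommGroup F] [InnerProductSpace 𝕜 F]
  {v : ι → E} {w : ι → F}

theorem inner_linearCombination_eq_of_inner_eq (h : ∀ i j, ⟪v i, v j⟫_𝕜 = ⟪w i, w j⟫_𝕜)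
    (f g : ι →₀ 𝕜) :
    ⟪linearCombination 𝕜 v f, linearCombination 𝕜 v g⟫_𝕜
      = ⟪linearCombination 𝕜 w f, linearCombination 𝕜 w g⟫_𝕜 := by
  simp only [linearCombination_apply, Finsupp.sum, sum_inner, inner_sum, inner_smul_left,
    inner_smul_right, h]

theorem norm_linearCombination_eq_of_inner_eq (h : ∀ i j, ⟪v i, v j⟫_𝕜 = ⟪w i, w j⟫_𝕜)
    (f : ι →₀ 𝕜) : ‖linearCombination 𝕜 w f‖ = ‖linearCombination 𝕜 v f‖ := by
  rw [norm_eq_sqrt_re_inner (𝕜 := 𝕜), norm_eq_sqrt_re_inner (𝕜 := 𝕜),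
    inner_linearCombination_eq_of_inner_eq h]

theorem ker_linearCombination_le_of_inner_eq (h : ∀ i j, ⟪v i, v j⟫_𝕜 = ⟪w i, w j⟫_𝕜) :
    LinearMap.ker (linearCombination 𝕜 v) ≤ LinearMap.ker (linearCombination 𝕜 w) := by
  intro f hf
  rw [LinearMap.mem_ker, ← norm_eq_zero, norm_linearCombination_eq_of_inner_eq h,
    LinearMap.mem_ker.mp hf, norm_zero]

theorem exists_linearIsometryEquiv_of_inner_eq [CompleteSpace E] [CompleteSpace F]
    (h : ∀ i j, ⟪v i, v j⟫_𝕜 = ⟪w i, w j⟫_𝕜)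
    (hv : (span 𝕜 (Set.range v)).topologicalClosure = ⊤)
    (hw : (span 𝕜 (Set.range w)).topologicalClosure = ⊤) :
    ∃ U : E ≃ₗᵢ[𝕜] F, ∀ i, U (v i) = w i := by
  -- The quotient `(ι →₀ 𝕜) ⧸ K` is the abstract span of the `v i`, embedded densely in both spaces.
  set K := LinearMap.ker (linearCombination 𝕜 v)
  have hK := ker_linearCombination_le_of_inner_eq h
  let e₁ := K.liftQ (linearCombination 𝕜 v) le_rfl
  let e₂ := K.liftQ (linearCombination 𝕜 w) hK
  have h_norm : ∀ x, ‖e₂ (LinearEquiv.refl 𝕜 _ x)‖ = ‖e₁ x‖ := by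
    rintro ⟨f⟩
    exact norm_linearCombination_eq_of_inner_eq h f
  refine ⟨(LinearEquiv.refl 𝕜 _).extendOfIsometry e₁ e₂
    (denseRange_liftQ_linearCombination hv le_rfl)
    (denseRange_liftQ_linearCombination hw hK) h_norm, fun i => ?_⟩
  simpa [e₁, e₂] using
    LinearEquiv.extendOfIsometry_eq _ e₁ e₂ _ _ h_norm (K.mkQ (Finsupp.single i 1))

end GramFamily

open scoped ComplexInnerProductSpace in
/-- Two minimal factorizations of the same operator-valued kernel are
unitarily equivalent: there is a unitary `U : L ≃ L'` with `U (V_s a) = V'_s a`. -/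
theorem stmt_7 {H L L' : Type*} [NormedAddCommGroup H] [InnerProductSpace ℂ H] [CompleteSpace H]
    [NormedAddCommGroup L] [InnerProductSpace ℂ L] [CompleteSpace L]
    [NormedAddCommGroup L'] [InnerProductSpace ℂ L'] [CompleteSpace L']
    {S : Type*} (V : S → H →L[ℂ] L) (V' : S → H →L[ℂ] L')
    (hVV' : ∀ s t, (ContinuousLinearMap.adjoint (V s)).comp (V t)
        = (ContinuousLinearMap.adjoint (V' s)).comp (V' t))
    (hmin : (Submodule.span ℂ (Set.range fun p : S × H => V p.1 p.2)).topologicalClosure = ⊤)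
    (hmin' : (Submodule.span ℂ (Set.range fun p : S × H => V' p.1 p.2)).topologicalClosure = ⊤) :
    ∃ U : L ≃ₗᵢ[ℂ] L', ∀ (s : S) (a : H), U (V s a) = V' s a := by
  have hinner : ∀ p q : S × H, ⟪V p.1 p.2, V q.1 q.2⟫ = ⟪V' p.1 p.2, V' q.1 q.2⟫ := by
    rintro ⟨s, a⟩ ⟨t, b⟩
    simpa only [ContinuousLinearMap.comp_apply, ContinuousLinearMap.adjoint_inner_right]
      using congrArg (fun T : H →L[ℂ] H => ⟪a, T b⟫) (hVV' s t)
  obtain ⟨U, hU⟩ := exists_linearIsometryEquiv_of_inner_eq hinner hmin hmin'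
  exact ⟨U, fun s a => hU (s, a)⟩
end

section
/- Let H be a complex Hilbert space and A : H → H a bounded linear operator with ‖A‖ ≤ 1 (a contraction). Define K : ℤ × ℤ → B(H) by K(m,n) = A^{n-m} if n ≥ m and K(m,n) = (A*)^{m-n} if n < m. Then K is a positive definite operator-valued kernel: for every n ∈ ℕ, all m₁,…,mₙ ∈ ℤ and all h₁,…,hₙ ∈ H, the sum ∑_{i,j} ⟨h_i, K(m_i,m_j) h_j⟩_H is a nonnegative real number. -/
open scoped InnerProductSpace ComplexOrder

/-- For a contraction `A` on `H`, the kernel `K(m,n) = A^{n-m}` for `n ≥ m`,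
`K(m,n) = (A*)^{m-n}` for `n < m`, is positive definite. -/
theorem stmt_9 {H : Type*} [NormedAddCommGroup H] [InnerProductSpace ℂ H] [CompleteSpace H]
    (A : H →L[ℂ] H) (hA : ‖A‖ ≤ 1) (K : ℤ → ℤ → H →L[ℂ] H)
    (hK : ∀ m n : ℤ, K m n =
      if m ≤ n then A ^ (n - m).toNat else (ContinuousLinearMap.adjoint A) ^ (m - n).toNat) :
    ∀ (n : ℕ) (m : Fin n → ℤ) (h : Fin n → H),
      0 ≤ ∑ i, ∑ j, (⟪h i, K (m i) (m j) (h j)⟫_ℂ) := by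
  intro n m h
  rcases Nat.eq_zero_or_pos n with hn | hn
  · subst hn; simp
  have hne : Nonempty (Fin n) := ⟨⟨0, hn⟩⟩
  have hune : (Finset.univ : Finset (Fin n)).Nonempty := Finset.univ_nonempty
  set a : ℤ := Finset.univ.inf' hune m with ha
  set b : ℤ := Finset.univ.sup' hune m with hb
  have ham : ∀ i, a ≤ m i := fun i => Finset.inf'_le _ (Finset.mem_univ i)
  have hmb : ∀ i, m i ≤ b := fun i => Finset.le_sup' _ (Finset.mem_univ i)
  have hab : a ≤ b := le_trans (ham ⟨0, hn⟩) (hmb ⟨0, hn⟩)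
  set x : ℤ → H := fun k => ∑ i, if k ≤ m i then (A ^ (m i - k).toNat) (h i) else 0 with hx
  -- contraction property
  have hAx : ∀ y : H, ‖A y‖ ≤ ‖y‖ := fun y =>
    (A.le_opNorm y).trans (mul_le_of_le_one_left (norm_nonneg y) hA)
  -- A applied to shifted x
  have hxA : ∀ k : ℤ, A (x (k + 1)) = ∑ i, if k < m i then (A ^ (m i - k).toNat) (h i) else 0 := by
    intro k
    rw [hx]
    rw [map_sum]
    refine Finset.sum_congr rfl fun i _ => ?_
    by_cases hc : k + 1 ≤ m i
    · rw [if_pos hc, if_pos (by omega)]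
      have h1 : (m i - k).toNat = (m i - (k + 1)).toNat + 1 := by omega
      rw [h1, pow_succ']
      rfl
    · rw [if_neg hc, if_neg (by omega), map_zero]
  -- recurrence
  have hrec : ∀ k : ℤ, x k = (∑ i, if m i = k then h i else 0) + A (x (k + 1)) := by
    intro k
    rw [hxA, ← Finset.sum_add_distrib]
    show (∑ i, if k ≤ m i then (A ^ (m i - k).toNat) (h i) else 0) = _
    refine Finset.sum_congr rfl fun i _ => ?_
    rcases lt_trichotomy (m i) k with hc | hc | hc
    · rw [if_neg (by omega), if_neg (by omega), if_neg (by omega), add_zero]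
    · rw [if_pos (by omega), if_pos hc, if_neg (by omega), add_zero]
      have h0 : (m i - k).toNat = 0 := by omega
      rw [h0, pow_zero]
      rfl
    · rw [if_pos (by omega), if_neg (by omega), if_pos hc, zero_add]
  -- x vanishes past b
  have hxb : x (b + 1) = 0 := by
    rw [hx]
    exact Finset.sum_eq_zero fun i _ => if_neg (by have := hmb i; omega)
  -- splitting the kernel term
  have hsplit : ∀ i j : Fin n, ⟪h i, (K (m i) (m j)) (h j)⟫_ℂ =
      (if m i ≤ m j then ⟪h i, (A ^ (m j - m i).toNat) (h j)⟫_ℂ else 0)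
      + (if m j < m i then ⟪(A ^ (m i - m j).toNat) (h i), h j⟫_ℂ else 0) := by
    intro i j
    rw [hK]
    by_cases hc : m i ≤ m j
    · rw [if_pos hc, if_pos hc, if_neg (not_lt.2 hc), add_zero]
    · rw [if_neg hc, if_neg hc, if_pos (not_le.1 hc), zero_add]
      have hadj : (ContinuousLinearMap.adjoint A) ^ (m i - m j).toNat
          = ContinuousLinearMap.adjoint (A ^ (m i - m j).toNat) := by
        rw [← ContinuousLinearMap.star_eq_adjoint, ← ContinuousLinearMap.star_eq_adjoint,
          ← star_pow]
      rw [hadj, ContinuousLinearMap.adjoint_inner_right]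
  have h1 : ∀ i, (∑ j, if m i ≤ m j then ⟪h i, (A ^ (m j - m i).toNat) (h j)⟫_ℂ else 0)
      = ⟪h i, x (m i)⟫_ℂ := by
    intro i
    rw [hx]
    rw [inner_sum]
    refine Finset.sum_congr rfl fun j _ => ?_
    by_cases hc : m i ≤ m j
    · rw [if_pos hc, if_pos hc]
    · rw [if_neg hc, if_neg hc, inner_zero_right]
  have h2 : ∀ j, (∑ i, if m j < m i then ⟪(A ^ (m i - m j).toNat) (h i), h j⟫_ℂ else 0)
      = ⟪A (x (m j + 1)), h j⟫_ℂ := by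
    intro j
    rw [hxA (m j), sum_inner]
    refine Finset.sum_congr rfl fun i _ => ?_
    by_cases hc : m j < m i
    · rw [if_pos hc, if_pos hc]
    · rw [if_neg hc, if_neg hc, inner_zero_left]
  have hS : (∑ i, ∑ j, ⟪h i, K (m i) (m j) (h j)⟫_ℂ)
      = ∑ i, (⟪h i, x (m i)⟫_ℂ + ⟪A (x (m i + 1)), h i⟫_ℂ) := by
    calc (∑ i, ∑ j, ⟪h i, K (m i) (m j) (h j)⟫_ℂ)
        = ∑ i, ((∑ j, if m i ≤ m j then ⟪h i, (A ^ (m j - m i).toNat) (h j)⟫_ℂ else 0)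
          + ∑ j, if m j < m i then ⟪(A ^ (m i - m j).toNat) (h i), h j⟫_ℂ else 0) := by
          refine Finset.sum_congr rfl fun i _ => ?_
          rw [← Finset.sum_add_distrib]
          exact Finset.sum_congr rfl fun j _ => hsplit i j
      _ = (∑ i, ∑ j, if m i ≤ m j then ⟪h i, (A ^ (m j - m i).toNat) (h j)⟫_ℂ else 0)
          + ∑ i, ∑ j, if m j < m i then ⟪(A ^ (m i - m j).toNat) (h i), h j⟫_ℂ else 0 :=
          Finset.sum_add_distrib
      _ = (∑ i, ⟪h i, x (m i)⟫_ℂ) + ∑ j, ⟪A (x (m j + 1)), h j⟫_ℂ := by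
          congr 1
          · exact Finset.sum_congr rfl fun i _ => h1 i
          · rw [Finset.sum_comm]
            exact Finset.sum_congr rfl fun j _ => h2 j
      _ = _ := Finset.sum_add_distrib.symm
  set N : ℕ := (b + 1 - a).toNat with hN
  have hfib : (∑ i, (⟪h i, x (m i)⟫_ℂ + ⟪A (x (m i + 1)), h i⟫_ℂ))
      = ∑ t ∈ Finset.range N, ∑ i ∈ Finset.univ.filter (fun i => (m i - a).toNat = t),
          (⟪h i, x (m i)⟫_ℂ + ⟪A (x (m i + 1)), h i⟫_ℂ) :=
    (Finset.sum_fiberwise_of_maps_to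
      (fun i _ => Finset.mem_range.2 (by have := ham i; have := hmb i; omega)) _).symm
  have hterm : ∀ t ∈ Finset.range N,
      (∑ i ∈ Finset.univ.filter (fun i => (m i - a).toNat = t),
        (⟪h i, x (m i)⟫_ℂ + ⟪A (x (m i + 1)), h i⟫_ℂ))
      = ⟪x (a + t), x (a + t)⟫_ℂ - ⟪A (x (a + t + 1)), A (x (a + t + 1))⟫_ℂ := by
    intro t _
    set k : ℤ := a + t with hk
    have hfe : Finset.univ.filter (fun i => (m i - a).toNat = t)
        = Finset.univ.filter (fun i => m i = k) := by
      refine Finset.filter_congr fun i _ => ?_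
      have := ham i
      constructor <;> intro hh <;> omega
    set g : H := ∑ i ∈ Finset.univ.filter (fun i => m i = k), h i with hg
    have hxk : x k = g + A (x (k + 1)) := by
      rw [hrec k, hg, Finset.sum_filter]
    have hsum : (∑ i ∈ Finset.univ.filter (fun i => (m i - a).toNat = t),
        (⟪h i, x (m i)⟫_ℂ + ⟪A (x (m i + 1)), h i⟫_ℂ))
        = ⟪g, x k⟫_ℂ + ⟪A (x (k + 1)), g⟫_ℂ := by
      rw [hfe]
      rw [hg, sum_inner, inner_sum, ← Finset.sum_add_distrib]
      refine Finset.sum_congr rfl fun i hi => ?_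
      rw [(Finset.mem_filter.1 hi).2]
    rw [hsum, hxk]
    simp only [inner_add_left, inner_add_right]
    ring
  have hS2 : (∑ i, ∑ j, ⟪h i, K (m i) (m j) (h j)⟫_ℂ)
      = ((∑ t ∈ Finset.range N, (‖x (a + t)‖ ^ 2 - ‖A (x (a + t + 1))‖ ^ 2) : ℝ) : ℂ) := by
    rw [hS, hfib, Finset.sum_congr rfl hterm]
    push_cast
    refine Finset.sum_congr rfl fun t _ => ?_
    rw [inner_self_eq_norm_sq_to_K, inner_self_eq_norm_sq_to_K]
    norm_cast
  rw [hS2, Complex.zero_le_real]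
  have hstep : ∀ t ∈ Finset.range N,
      (fun s : ℕ => ‖x (a + s)‖ ^ 2) t - (fun s : ℕ => ‖x (a + s)‖ ^ 2) (t + 1)
        ≤ ‖x (a + t)‖ ^ 2 - ‖A (x (a + t + 1))‖ ^ 2 := by
    intro t _
    have hc : ‖A (x (a + t + 1))‖ ≤ ‖x (a + t + 1)‖ := hAx _
    have hcast : a + ((t : ℕ) + 1 : ℕ) = a + t + 1 := by push_cast; ring
    simp only [hcast]
    have h0 : (0:ℝ) ≤ ‖A (x (a + t + 1))‖ := norm_nonneg _
    nlinarith [norm_nonneg (x (a + t + 1))]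
  have htel : (∑ t ∈ Finset.range N,
      ((fun s : ℕ => ‖x (a + s)‖ ^ 2) t - (fun s : ℕ => ‖x (a + s)‖ ^ 2) (t + 1)))
      = ‖x (a + (0:ℕ))‖ ^ 2 - ‖x (a + (N:ℕ))‖ ^ 2 :=
    Finset.sum_range_sub' (fun s : ℕ => ‖x (a + s)‖ ^ 2) N
  have haN : a + (N : ℤ) = b + 1 := by rw [hN]; omega
  calc (0:ℝ) ≤ ‖x (a + (0:ℕ))‖ ^ 2 - ‖x (a + (N:ℕ))‖ ^ 2 := by
        rw [haN, hxb]
        simp [sq_nonneg]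
    _ = ∑ t ∈ Finset.range N,
        ((fun s : ℕ => ‖x (a + s)‖ ^ 2) t - (fun s : ℕ => ‖x (a + s)‖ ^ 2) (t + 1)) := htel.symm
    _ ≤ _ := Finset.sum_le_sum hstep
end

section
/- Let H be a complex Hilbert space, S a measurable space with σ-algebra 𝓑, and let Q assign to each measurable set A ∈ 𝓑 a bounded operator Q(A) on H such that: each Q(A) is selfadjoint and positive (⟨h, Q(A) h⟩ ≥ 0 for all h ∈ H), Q(∅) = 0, and Q is finitely additive (Q(A ∪ B) = Q(A) + Q(B) whenever A, B ∈ 𝓑 are disjoint). Then the kernel K : 𝓑 × 𝓑 → B(H) defined by K(A,B) = Q(A ∩ B) is positive definite: for every n ∈ ℕ, all A₁,…,Aₙ ∈ 𝓑 and all a₁,…,aₙ ∈ H, the sum ∑_{i,j} ⟨a_i, Q(A_i ∩ A_j) a_j⟩_H is a nonnegative real number. -/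
open scoped InnerProductSpace ComplexOrder

/-- For a finitely additive POVM `Q` on a measurable space `S`, the kernel
`K(A,B) = Q(A ∩ B)` is positive definite. -/
theorem stmt_11 {H : Type*} [NormedAddCommGroup H] [InnerProductSpace ℂ H] [CompleteSpace H]
    {S : Type*} [MeasurableSpace S] (Q : Set S → H →L[ℂ] H)
    (hsa : ∀ A : Set S, MeasurableSet A → IsSelfAdjoint (Q A))
    (hpos : ∀ A : Set S, MeasurableSet A → ∀ h : H, 0 ≤ (⟪h, Q A h⟫_ℂ))
    (hempty : Q ∅ = 0)
    (hadd : ∀ A B : Set S, MeasurableSet A → MeasurableSet B → Disjoint A B →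
      Q (A ∪ B) = Q A + Q B) :
    ∀ (n : ℕ) (A : Fin n → Set S), (∀ i, MeasurableSet (A i)) → ∀ a : Fin n → H,
      0 ≤ ∑ i, ∑ j, (⟪a i, Q (A i ∩ A j) (a j)⟫_ℂ) := by
  intro n A hA a
  classical
  set atom : Finset (Fin n) → Set S := fun T => {x | ∀ i, x ∈ A i ↔ i ∈ T} with hatom
  have hatomEq : ∀ T, atom T = ⋂ i, (if i ∈ T then A i else (A i)ᶜ) := by
    intro T
    ext x
    simp only [hatom, Set.mem_setOf_eq, Set.mem_iInter]
    constructor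
    · intro h i; by_cases hi : i ∈ T <;> simp [hi, h i]
    · intro h i; have := h i; by_cases hi : i ∈ T <;> simp [hi] at this ⊢ <;> tauto
  have hatomMeas : ∀ T, MeasurableSet (atom T) := by
    intro T; rw [hatomEq]
    exact MeasurableSet.iInter fun i => by
      by_cases hi : i ∈ T <;> simp [hi, hA i, (hA i).compl]
  have hatomDisj : ∀ T T' : Finset (Fin n), T ≠ T' → Disjoint (atom T) (atom T') := by
    intro T T' hne
    rw [Set.disjoint_left]
    intro x hx hx'
    apply hne
    ext i
    rw [← hx i, hx' i]
  have hQadd : ∀ (s : Finset (Finset (Fin n))),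
      Q (⋃ T ∈ s, atom T) = ∑ T ∈ s, Q (atom T) := by
    intro s
    induction s using Finset.cons_induction with
    | empty => simpa using hempty
    | cons T s hTs ih =>
      rw [Finset.cons_eq_insert, Finset.set_biUnion_insert, hadd _ _ (hatomMeas T)
        (s.measurableSet_biUnion fun t _ => hatomMeas t)
        (Set.disjoint_iUnion₂_right.mpr fun T' hT' =>
          hatomDisj T T' fun h => hTs (h ▸ hT')),
        Finset.sum_insert hTs, ih]
  have hinter : ∀ i j, A i ∩ A j
      = ⋃ T ∈ Finset.univ.filter (fun T => i ∈ T ∧ j ∈ T), atom T := by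
    intro i j
    ext x
    simp only [Set.mem_inter_iff, Set.mem_iUnion, Finset.mem_filter, Finset.mem_univ, true_and]
    constructor
    · rintro ⟨hxi, hxj⟩
      refine ⟨Finset.univ.filter (fun k => x ∈ A k), ⟨⟨by simpa, by simpa⟩, ?_⟩⟩
      intro k; simp
    · rintro ⟨T, ⟨hi, hj⟩, hx⟩
      exact ⟨(hx i).2 hi, (hx j).2 hj⟩
  have key : (∑ i, ∑ j, (⟪a i, Q (A i ∩ A j) (a j)⟫_ℂ)) =
      ∑ T : Finset (Fin n), ⟪∑ i ∈ T, a i, Q (atom T) (∑ j ∈ T, a j)⟫_ℂ := by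
    have h1 : ∀ i j, (⟪a i, Q (A i ∩ A j) (a j)⟫_ℂ) =
        ∑ T : Finset (Fin n),
          (if i ∈ T ∧ j ∈ T then ⟪a i, Q (atom T) (a j)⟫_ℂ else 0) := by
      intro i j
      rw [hinter i j, hQadd, ← Finset.sum_filter]
      simp only [ContinuousLinearMap.sum_apply, inner_sum]
    have hdbl : ∀ (T : Finset (Fin n)) (f : Fin n → Fin n → ℂ),
        (∑ i, ∑ j, (if i ∈ T ∧ j ∈ T then f i j else 0)) = ∑ i ∈ T, ∑ j ∈ T, f i j := by
      intro T f
      calc ∑ i, ∑ j, (if i ∈ T ∧ j ∈ T then f i j else 0)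
          = ∑ i, (if i ∈ T then ∑ j, (if j ∈ T then f i j else 0) else 0) := by
            refine Finset.sum_congr rfl fun i _ => ?_
            by_cases hi : i ∈ T
            · simp [hi]
            · simp [hi]
        _ = ∑ i ∈ T, ∑ j ∈ T, f i j := by
            rw [Finset.sum_ite_mem, Finset.univ_inter]
            exact Finset.sum_congr rfl fun i _ => by
              rw [Finset.sum_ite_mem, Finset.univ_inter]
    have h2 : ∀ T : Finset (Fin n),
        (⟪∑ i ∈ T, a i, Q (atom T) (∑ j ∈ T, a j)⟫_ℂ) =
        ∑ i, ∑ j, (if i ∈ T ∧ j ∈ T then ⟪a i, Q (atom T) (a j)⟫_ℂ else 0) := by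
      intro T
      rw [map_sum, sum_inner, hdbl]
      exact Finset.sum_congr rfl fun i _ => inner_sum _ _ _
    simp only [h1, h2]
    have hswap : ∀ i : Fin n,
        (∑ j, ∑ T : Finset (Fin n),
          (if i ∈ T ∧ j ∈ T then ⟪a i, Q (atom T) (a j)⟫_ℂ else 0)) =
        ∑ T : Finset (Fin n), ∑ j,
          (if i ∈ T ∧ j ∈ T then ⟪a i, Q (atom T) (a j)⟫_ℂ else 0) :=
      fun i => Finset.sum_comm
    simp only [hswap]
    exact Finset.sum_comm
  rw [key]
  exact Finset.sum_nonneg fun T _ => hpos _ (hatomMeas T) _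
end

section
/- Let H be a complex Hilbert space, S a measurable space with σ-algebra 𝓑, and let Q assign to each A ∈ 𝓑 a bounded operator Q(A) on H such that each Q(A) is selfadjoint and positive, Q(∅) = 0, Q(S) = I_H, and Q is finitely additive on disjoint measurable sets. Then there exist a complex Hilbert space L, a linear isometry V : H → L, and a map P assigning to each A ∈ 𝓑 a bounded operator on L such that each P(A) is a selfadjoint idempotent (P(A)* = P(A) = P(A)²), P(A ∩ B) = P(A) ∘ P(B) for all A, B ∈ 𝓑, P(S) = I_L, and Q(A) = V* ∘ P(A) ∘ V for all A ∈ 𝓑 (Naimark-type dilation of a finitely additive POVM). -/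
open scoped InnerProductSpace ComplexOrder

noncomputable section NaimarkAux

open UniformSpace Finsupp

namespace NaimarkDil

/-! ### Lifting operators to the completion of a seminormed inner product space -/

section Lift

variable {E : Type*} [SeminormedAddCommGroup E] [InnerProductSpace ℂ E]

/-- Extend a continuous linear map on a seminormed space to its completion. -/
def cLift (T : E →L[ℂ] E) : Completion E →L[ℂ] Completion E where
  toFun := Completion.map T
  map_add' x y := by
    refine Completion.induction_on₂ x y ?_ ?_
    · exact isClosed_eq (Completion.continuous_map.comp continuous_add)
        (Continuous.add (f := fun x : Completion E × Completion E => Completion.map T x.1)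
          (g := fun x : Completion E × Completion E => Completion.map T x.2)
          ((Completion.continuous_map).comp continuous_fst)
          ((Completion.continuous_map).comp continuous_snd))
    · intro a b
      rw [← Completion.coe_add, Completion.map_coe T.uniformContinuous,
        Completion.map_coe T.uniformContinuous, Completion.map_coe T.uniformContinuous,
        map_add, Completion.coe_add]
  map_smul' c x := by
    refine Completion.induction_on x ?_ ?_
    · exact isClosed_eq (Completion.continuous_map.comp (continuous_const_smul c))
        ((continuous_const_smul c).comp Completion.continuous_map)
    · intro a
      show Completion.map T (c • (a : Completion E)) = c • Completion.map T (a : Completion E)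
      rw [← Completion.coe_smul, Completion.map_coe T.uniformContinuous,
        Completion.map_coe T.uniformContinuous, map_smul, Completion.coe_smul]
  cont := Completion.continuous_map

@[simp] lemma cLift_coe (T : E →L[ℂ] E) (x : E) :
    cLift T (x : Completion E) = ((T x : E) : Completion E) :=
  Completion.map_coe T.uniformContinuous x

lemma cLift_comp (T U : E →L[ℂ] E) : (cLift T).comp (cLift U) = cLift (T.comp U) := by
  ext x
  refine Completion.induction_on x ?_ ?_
  · exact isClosed_eq ((cLift T).continuous.comp (cLift U).continuous) (cLift (T.comp U)).continuous
  · intro a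
    simp only [ContinuousLinearMap.comp_apply, cLift_coe]

lemma cLift_id : cLift (ContinuousLinearMap.id ℂ E) = ContinuousLinearMap.id ℂ (Completion E) := by
  ext x
  refine Completion.induction_on x ?_ ?_
  · exact isClosed_eq (cLift _).continuous continuous_id
  · intro a
    simp only [cLift_coe, ContinuousLinearMap.id_apply]

lemma cLift_adjoint (T : E →L[ℂ] E) (hT : ∀ x y : E, ⟪T x, y⟫_ℂ = ⟪x, T y⟫_ℂ) :
    ContinuousLinearMap.adjoint (cLift T) = cLift T := by
  refine (((cLift T).eq_adjoint_iff (cLift T)).mpr ?_).symm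
  intro x y
  refine Completion.induction_on₂ x y ?_ ?_
  · apply isClosed_eq
    · exact Completion.Continuous.inner ((cLift T).continuous.comp continuous_fst) continuous_snd
    · exact Completion.Continuous.inner continuous_fst ((cLift T).continuous.comp continuous_snd)
  · intro a b
    rw [cLift_coe, cLift_coe, Completion.inner_coe, Completion.inner_coe]
    exact hT a b

end Lift

/-! ### The semi-inner-product space of `H`-valued simple tags on measurable sets -/

section W

variable {H : Type*} [NormedAddCommGroup H] [InnerProductSpace ℂ H] [CompleteSpace H]
variable {S : Type*} [MeasurableSpace S]

variable (Q : Set S → H →L[ℂ] H)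

/-- The inner product on finitely supported `H`-valued functions on measurable sets. -/
def wInner (f g : {A : Set S // MeasurableSet A} →₀ H) : ℂ :=
  f.sum fun A h => g.sum fun B k => ⟪h, Q (↑A ∩ ↑B) k⟫_ℂ

lemma wInner_add_left (f f' g : {A : Set S // MeasurableSet A} →₀ H) :
    wInner Q (f + f') g = wInner Q f g + wInner Q f' g := by
  unfold wInner
  refine Finsupp.sum_add_index' (fun A => ?_) (fun A h h' => ?_)
  · simp [Finsupp.sum]
  · simp [inner_add_left, Finsupp.sum_add]

lemma wInner_add_right (f g g' : {A : Set S // MeasurableSet A} →₀ H) :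
    wInner Q f (g + g') = wInner Q f g + wInner Q f g' := by
  unfold wInner
  rw [← Finsupp.sum_add]
  refine Finsupp.sum_congr fun A _ => ?_
  refine Finsupp.sum_add_index' (fun B => ?_) (fun B k k' => ?_)
  · simp
  · simp [inner_add_right]

lemma wInner_smul_left (c : ℂ) (f g : {A : Set S // MeasurableSet A} →₀ H) :
    wInner Q (c • f) g = (starRingEnd ℂ) c * wInner Q f g := by
  unfold wInner
  rw [Finsupp.sum_smul_index' (fun A => by simp [Finsupp.sum])]
  have hm : ∀ (c' : ℂ) (F : {A : Set S // MeasurableSet A} → H → ℂ)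
      (u : {A : Set S // MeasurableSet A} →₀ H),
      c' * u.sum F = u.sum fun a b => c' * F a b := fun c' F u =>
    map_finsuppSum (AddMonoidHom.mulLeft c') u F
  rw [hm]
  refine Finsupp.sum_congr fun A _ => ?_
  rw [hm]
  refine Finsupp.sum_congr fun B _ => ?_
  rw [inner_smul_left]

lemma wInner_conj (hsa : ∀ A : Set S, MeasurableSet A → IsSelfAdjoint (Q A))
    (f g : {A : Set S // MeasurableSet A} →₀ H) :
    (starRingEnd ℂ) (wInner Q g f) = wInner Q f g := by
  unfold wInner
  rw [map_finsuppSum]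
  simp only [map_finsuppSum]
  rw [Finsupp.sum_comm]
  refine Finsupp.sum_congr fun A _ => Finsupp.sum_congr fun B _ => ?_
  have hadj : ContinuousLinearMap.adjoint (Q (↑B ∩ ↑A)) = Q (↑B ∩ ↑A) := by
    rw [← ContinuousLinearMap.star_eq_adjoint]
    exact hsa _ (B.2.inter A.2)
  rw [inner_conj_symm, ← hadj, ContinuousLinearMap.adjoint_inner_left, Set.inter_comm]

lemma Q_biUnion (hempty : Q ∅ = 0)
    (hadd : ∀ A B : Set S, MeasurableSet A → MeasurableSet B → Disjoint A B →
      Q (A ∪ B) = Q A + Q B)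
    {ι : Type*} (s : Finset ι) (F : ι → Set S)
    (hm : ∀ i ∈ s, MeasurableSet (F i))
    (hd : ∀ i ∈ s, ∀ j ∈ s, i ≠ j → Disjoint (F i) (F j)) :
    Q (⋃ i ∈ s, F i) = ∑ i ∈ s, Q (F i) := by
  classical
  induction s using Finset.induction_on with
  | empty => simpa using hempty
  | @insert a s ha ih =>
    rw [Finset.set_biUnion_insert,
      hadd _ _ (hm a (Finset.mem_insert_self a s))
        (Finset.measurableSet_biUnion s fun b hb => hm b (Finset.mem_insert_of_mem hb))
        ?_,
      Finset.sum_insert ha,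
      ih (fun i hi => hm i (Finset.mem_insert_of_mem hi))
        (fun i hi j hj hij => hd i (Finset.mem_insert_of_mem hi) j (Finset.mem_insert_of_mem hj) hij)]
    simp only [Set.disjoint_iUnion_right]
    intro i hi
    exact hd a (Finset.mem_insert_self a s) i (Finset.mem_insert_of_mem hi)
      (fun h => ha (h ▸ hi))

lemma wKey
    (hpos : ∀ A : Set S, MeasurableSet A → ∀ h : H, 0 ≤ (⟪h, Q A h⟫_ℂ))
    (hempty : Q ∅ = 0)
    (hadd : ∀ A B : Set S, MeasurableSet A → MeasurableSet B → Disjoint A B →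
      Q (A ∪ B) = Q A + Q B)
    (t : Finset {A : Set S // MeasurableSet A}) (v : {A : Set S // MeasurableSet A} → H) :
    0 ≤ ∑ A ∈ t, ∑ B ∈ t, ⟪v A, Q (↑A ∩ ↑B) (v B)⟫_ℂ := by
  classical
  set E : Finset {A : Set S // MeasurableSet A} → Set S := fun σ =>
    (⋂ A ∈ σ, (A : Set S)) ∩ (⋂ A ∈ (t \ σ), ((A : Set S))ᶜ) with hE
  have measE : ∀ σ, MeasurableSet (E σ) := fun σ =>
    (Finset.measurableSet_biInter σ fun A _ => A.2).inter
      (Finset.measurableSet_biInter _ fun A _ => A.2.compl)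
  have disjE : ∀ σ ∈ t.powerset, ∀ τ ∈ t.powerset, σ ≠ τ → Disjoint (E σ) (E τ) := by
    intro σ hσ τ hτ hne
    rw [Finset.mem_powerset] at hσ hτ
    rw [Set.disjoint_left]
    rintro x ⟨hx1, hx2⟩ ⟨hy1, hy2⟩
    rw [Set.mem_iInter₂] at hx1 hy1
    rw [Set.mem_iInter₂] at hx2 hy2
    have hex : ∃ A, (A ∈ σ ∧ A ∉ τ) ∨ (A ∈ τ ∧ A ∉ σ) := by
      by_contra hcon
      push_neg at hcon
      exact hne (Finset.ext fun A => ⟨fun h => (hcon A).1 h, fun h => (hcon A).2 h⟩)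
    obtain ⟨A, hA⟩ := hex
    rcases hA with ⟨h1, h2⟩ | ⟨h1, h2⟩
    · exact hy2 A (Finset.mem_sdiff.mpr ⟨hσ h1, h2⟩) (hx1 A h1)
    · exact hx2 A (Finset.mem_sdiff.mpr ⟨hτ h1, h2⟩) (hy1 A h1)
  have decomp : ∀ A ∈ t, ∀ B ∈ t,
      ((A : Set S) ∩ (B : Set S))
        = ⋃ σ ∈ t.powerset.filter (fun σ => A ∈ σ ∧ B ∈ σ), E σ := by
    intro A hA B hB
    ext x
    simp only [Set.mem_inter_iff, Set.mem_iUnion, Finset.mem_filter, Finset.mem_powerset,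
      exists_prop, hE]
    constructor
    · rintro ⟨hxA, hxB⟩
      refine ⟨t.filter (fun C => x ∈ (C : Set S)), ⟨Finset.filter_subset _ _,
        Finset.mem_filter.mpr ⟨hA, hxA⟩, Finset.mem_filter.mpr ⟨hB, hxB⟩⟩, ?_, ?_⟩
      · exact Set.mem_iInter₂.mpr fun C hC => (Finset.mem_filter.mp hC).2
      · refine Set.mem_iInter₂.mpr fun C hC => ?_
        rcases Finset.mem_sdiff.mp hC with ⟨hCt, hCf⟩
        exact fun hxC => hCf (Finset.mem_filter.mpr ⟨hCt, hxC⟩)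
    · rintro ⟨σ, ⟨hσt, hAσ, hBσ⟩, hxσ, _⟩
      exact ⟨Set.mem_iInter₂.mp hxσ A hAσ, Set.mem_iInter₂.mp hxσ B hBσ⟩
  have step1 : ∀ A ∈ t, ∀ B ∈ t, ⟪v A, Q (↑A ∩ ↑B) (v B)⟫_ℂ
      = ∑ σ ∈ t.powerset, if A ∈ σ ∧ B ∈ σ then ⟪v A, Q (E σ) (v B)⟫_ℂ else 0 := by
    intro A hA B hB
    rw [decomp A hA B hB, Q_biUnion Q hempty hadd _ _
        (fun σ _ => measE σ)
        (fun σ hσ τ hτ h => disjE σ (Finset.mem_filter.mp hσ).1 τ (Finset.mem_filter.mp hτ).1 h),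
      ContinuousLinearMap.sum_apply, inner_sum, Finset.sum_filter]
  have eq1 : ∑ A ∈ t, ∑ B ∈ t, ⟪v A, Q (↑A ∩ ↑B) (v B)⟫_ℂ
      = ∑ σ ∈ t.powerset, ⟪∑ A ∈ σ, v A, Q (E σ) (∑ B ∈ σ, v B)⟫_ℂ := by
    rw [Finset.sum_congr rfl (fun A hA => Finset.sum_congr rfl fun B hB => step1 A hA B hB),
      Finset.sum_congr rfl (fun (A : {A : Set S // MeasurableSet A}) _ =>
        (Finset.sum_comm : _ = _)),
      Finset.sum_comm]
    refine Finset.sum_congr rfl fun σ hσ => ?_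
    rw [Finset.mem_powerset] at hσ
    calc ∑ A ∈ t, ∑ B ∈ t, (if A ∈ σ ∧ B ∈ σ then ⟪v A, Q (E σ) (v B)⟫_ℂ else 0)
        = ∑ A ∈ t, (if A ∈ σ then ∑ B ∈ t,
            (if B ∈ σ then ⟪v A, Q (E σ) (v B)⟫_ℂ else 0) else 0) :=
          Finset.sum_congr rfl (fun A _ => by by_cases h : A ∈ σ <;> simp [h])
      _ = ∑ A ∈ t ∩ σ, ∑ B ∈ t, (if B ∈ σ then ⟪v A, Q (E σ) (v B)⟫_ℂ else 0) :=
          Finset.sum_ite_mem _ _ _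
      _ = ∑ A ∈ t ∩ σ, ∑ B ∈ t ∩ σ, ⟪v A, Q (E σ) (v B)⟫_ℂ :=
          Finset.sum_congr rfl fun A _ => Finset.sum_ite_mem _ _ _
      _ = ∑ A ∈ σ, ∑ B ∈ σ, ⟪v A, Q (E σ) (v B)⟫_ℂ := by
          rw [Finset.inter_eq_right.mpr hσ]
      _ = ∑ A ∈ σ, ⟪v A, Q (E σ) (∑ B ∈ σ, v B)⟫_ℂ :=
          Finset.sum_congr rfl fun A _ => by rw [map_sum, inner_sum]
      _ = ⟪∑ A ∈ σ, v A, Q (E σ) (∑ B ∈ σ, v B)⟫_ℂ := (sum_inner _ _ _).symm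
  rw [eq1]
  exact Finset.sum_nonneg fun σ _ => hpos _ (measE σ) _

/-- intersection of measurable sets as a bundled measurable set -/
def minter (A B : {A : Set S // MeasurableSet A}) : {A : Set S // MeasurableSet A} :=
  ⟨(A : Set S) ∩ (B : Set S), A.2.inter B.2⟩

/-- The compression operator on the simple-tag space. -/
def wP (A : {A : Set S // MeasurableSet A}) :
    ({A : Set S // MeasurableSet A} →₀ H) →ₗ[ℂ] ({A : Set S // MeasurableSet A} →₀ H) :=
  Finsupp.lmapDomain H ℂ (fun C => minter A C)

lemma wInner_mapDomain_left (φ : {A : Set S // MeasurableSet A} → {A : Set S // MeasurableSet A})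
    (f g : {A : Set S // MeasurableSet A} →₀ H) :
    wInner Q (Finsupp.mapDomain φ f) g
      = f.sum fun A h => g.sum fun B k => ⟪h, Q (↑(φ A) ∩ ↑B) k⟫_ℂ := by
  unfold wInner
  exact Finsupp.sum_mapDomain_index (fun A => by simp [Finsupp.sum])
    (fun A h h' => by simp [inner_add_left, Finsupp.sum_add])

lemma wInner_mapDomain_right (φ : {A : Set S // MeasurableSet A} → {A : Set S // MeasurableSet A})
    (f g : {A : Set S // MeasurableSet A} →₀ H) :
    wInner Q f (Finsupp.mapDomain φ g)
      = f.sum fun A h => g.sum fun B k => ⟪h, Q (↑A ∩ ↑(φ B)) k⟫_ℂ := by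
  unfold wInner
  refine Finsupp.sum_congr fun A _ => ?_
  exact Finsupp.sum_mapDomain_index (fun B => by simp)
    (fun B k k' => by simp [inner_add_right])

lemma wP_symm (A : {A : Set S // MeasurableSet A})
    (f g : {A : Set S // MeasurableSet A} →₀ H) :
    wInner Q (wP A f) g = wInner Q f (wP A g) := by
  unfold wP
  rw [Finsupp.lmapDomain_apply, Finsupp.lmapDomain_apply, wInner_mapDomain_left,
    wInner_mapDomain_right]
  refine Finsupp.sum_congr fun B _ => Finsupp.sum_congr fun C _ => ?_
  have : ((minter A B : {A : Set S // MeasurableSet A}) : Set S) ∩ (C : Set S)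
      = (B : Set S) ∩ ((minter A C : {A : Set S // MeasurableSet A}) : Set S) := by
    simp only [minter]
    rw [Set.inter_comm (A : Set S) (B : Set S), Set.inter_assoc]
  rw [this]

lemma wP_comp (A B : {A : Set S // MeasurableSet A}) (f : {A : Set S // MeasurableSet A} →₀ H) :
    wP (minter A B) f = wP A (wP B f) := by
  unfold wP
  simp only [Finsupp.lmapDomain_apply]
  rw [← Finsupp.mapDomain_comp]
  have : ((fun C => minter A C) ∘ (fun C => minter B C)) = fun C => minter (minter A B) C := by
    funext C
    exact Subtype.ext (Set.inter_assoc _ _ _).symm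
  rw [this]

lemma wP_univ (f : {A : Set S // MeasurableSet A} →₀ H) :
    wP (⟨Set.univ, MeasurableSet.univ⟩ : {A : Set S // MeasurableSet A}) f = f := by
  unfold wP
  rw [Finsupp.lmapDomain_apply]
  have : (fun C => minter (⟨Set.univ, MeasurableSet.univ⟩ : {A : Set S // MeasurableSet A}) C)
      = id := by
    funext C
    exact Subtype.ext (Set.univ_inter _)
  rw [this, Finsupp.mapDomain_id]

lemma wP_single (A B : {A : Set S // MeasurableSet A}) (h : H) :
    wP A (Finsupp.single B h) = Finsupp.single (minter A B) h := by
  unfold wP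
  rw [Finsupp.lmapDomain_apply, Finsupp.mapDomain_single]

lemma wInner_single_single (A B : {A : Set S // MeasurableSet A}) (h k : H) :
    wInner Q (Finsupp.single A h) (Finsupp.single B k) = ⟪h, Q (↑A ∩ ↑B) k⟫_ℂ := by
  unfold wInner
  rw [Finsupp.sum_single_index (by simp [Finsupp.sum]), Finsupp.sum_single_index (by simp)]

end W

end NaimarkDil

end NaimarkAux

open NaimarkDil UniformSpace in
/-- Naimark-type dilation of a finitely additive POVM: `Q = V* P(·) V`,
where `P` is a projection-valued (multiplicative, selfadjoint, idempotent) map on a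
larger Hilbert space `L` and `V : H → L` is an isometry. -/
theorem stmt_12 {H : Type u_1} [NormedAddCommGroup H] [InnerProductSpace ℂ H] [CompleteSpace H]
    {S : Type u_2} [MeasurableSpace S] (Q : Set S → H →L[ℂ] H)
    (hsa : ∀ A : Set S, MeasurableSet A → IsSelfAdjoint (Q A))
    (hpos : ∀ A : Set S, MeasurableSet A → ∀ h : H, 0 ≤ (⟪h, Q A h⟫_ℂ))
    (hempty : Q ∅ = 0)
    (huniv : Q Set.univ = ContinuousLinearMap.id ℂ H)
    (hadd : ∀ A B : Set S, MeasurableSet A → MeasurableSet B → Disjoint A B →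
      Q (A ∪ B) = Q A + Q B) :
    ∃ (L : Type (max u_1 u_2)) (_ : NormedAddCommGroup L) (_ : InnerProductSpace ℂ L)
      (_ : CompleteSpace L) (V : H →L[ℂ] L) (P : Set S → L →L[ℂ] L),
      (∀ h : H, ‖V h‖ = ‖h‖) ∧
      (∀ A : Set S, MeasurableSet A → ContinuousLinearMap.adjoint (P A) = P A) ∧
      (∀ A : Set S, MeasurableSet A → (P A).comp (P A) = P A) ∧
      (∀ A B : Set S, MeasurableSet A → MeasurableSet B → P (A ∩ B) = (P A).comp (P B)) ∧
      P Set.univ = ContinuousLinearMap.id ℂ L ∧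
      (∀ A : Set S, MeasurableSet A →
        Q A = ((ContinuousLinearMap.adjoint V).comp (P A)).comp V) := by
  classical
  -- the semi-inner-product space
  letI W := ({A : Set S // MeasurableSet A} →₀ H)
  letI cW : PreInnerProductSpace.Core ℂ W :=
    { inner := wInner Q
      conj_inner_symm := fun f g => wInner_conj Q hsa f g
      re_inner_nonneg := fun f => by
        have h0 : 0 ≤ wInner Q f f := wKey Q hpos hempty hadd f.support f
        rw [RCLike.re_to_complex]
        exact (Complex.nonneg_iff.mp h0).1
      add_left := fun f f' g => wInner_add_left Q f f' g
      smul_left := fun f g c => wInner_smul_left Q c f g }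
  letI : SeminormedAddCommGroup W := @InnerProductSpace.Core.toSeminormedAddCommGroup ℂ W _ _ _ cW
  letI : NormedSpace ℂ W := @InnerProductSpace.Core.toNormedSpace ℂ W _ _ _ cW
  letI : InnerProductSpace ℂ W :=
    { inner := wInner Q
      norm_sq_eq_re_inner := fun x => Real.sq_sqrt (cW.re_inner_nonneg x)
      conj_inner_symm := cW.conj_inner_symm
      add_left := cW.add_left
      smul_left := fun x y r => cW.smul_left x y r }
  have hIW : ∀ f g : W, ⟪f, g⟫_ℂ = wInner Q f g := fun _ _ => rfl
  -- the embedding of H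
  let MU : {A : Set S // MeasurableSet A} := ⟨Set.univ, MeasurableSet.univ⟩
  let wV : H →ₗ[ℂ] W := Finsupp.lsingle MU
  have hVinner : ∀ h k : H, ⟪wV h, wV k⟫_ℂ = ⟪h, k⟫_ℂ := by
    intro h k
    rw [hIW]
    show wInner Q (Finsupp.single MU h) (Finsupp.single MU k) = _
    rw [wInner_single_single]
    show ⟪h, Q (Set.univ ∩ Set.univ) k⟫_ℂ = _
    rw [Set.univ_inter, huniv]
    rfl
  have hVnorm : ∀ h : H, ‖wV h‖ = ‖h‖ := by
    intro h
    have h2 : ‖wV h‖ ^ 2 = ‖h‖ ^ 2 := by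
      rw [← inner_self_eq_norm_sq (𝕜 := ℂ), ← inner_self_eq_norm_sq (𝕜 := ℂ) (x := h), hVinner]
    rw [← Real.sqrt_sq (norm_nonneg (wV h)), h2, Real.sqrt_sq (norm_nonneg h)]
  let Vc : H →L[ℂ] W := LinearMap.mkContinuous wV 1 (fun h => by rw [hVnorm, one_mul])
  let V : H →L[ℂ] Completion W := ContinuousLinearMap.comp (UniformSpace.Completion.toComplL (𝕜 := ℂ) (E := W)) Vc
  have hVapp : ∀ h : H, V h = ((Vc h : W) : Completion W) := fun h =>
    congrFun (UniformSpace.Completion.coe_toComplL (𝕜 := ℂ) (E := W)) (Vc h)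
  -- the projections on W
  have hPsa : ∀ (A : {A : Set S // MeasurableSet A}) (f g : W),
      ⟪wP A f, g⟫_ℂ = ⟪f, wP A g⟫_ℂ := fun A f g => by
    rw [hIW, hIW]; exact wP_symm Q A f g
  have hPidem : ∀ (A : {A : Set S // MeasurableSet A}) (f : W), wP A (wP A f) = wP A f := by
    intro A f
    rw [← wP_comp, show minter A A = A from Subtype.ext (Set.inter_self _)]
  have hPbound : ∀ (A : {A : Set S // MeasurableSet A}) (f : W), ‖wP A f‖ ≤ 1 * ‖f‖ := by
    intro A f
    rw [one_mul]
    have h2 : ⟪wP A f, wP A f⟫_ℂ = ⟪f, wP A f⟫_ℂ := by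
      rw [hPsa A f (wP A f), hPidem]
    have h3 : ‖wP A f‖ ^ 2 ≤ ‖f‖ * ‖wP A f‖ :=
      calc ‖wP A f‖ ^ 2 = RCLike.re ⟪wP A f, wP A f⟫_ℂ := (inner_self_eq_norm_sq _).symm
        _ = RCLike.re ⟪f, wP A f⟫_ℂ := by rw [h2]
        _ ≤ ‖(⟪f, wP A f⟫_ℂ : ℂ)‖ := RCLike.re_le_norm _
        _ ≤ ‖f‖ * ‖wP A f‖ := norm_inner_le_norm _ _
    rcases eq_or_lt_of_le (norm_nonneg (wP A f)) with h | h
    · rw [← h]; exact norm_nonneg f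
    · rw [pow_two] at h3
      exact le_of_mul_le_mul_right h3 h
  let P0 : {A : Set S // MeasurableSet A} → (W →L[ℂ] W) := fun A =>
    LinearMap.mkContinuous (wP A) 1 (hPbound A)
  have hP0app : ∀ (A : {A : Set S // MeasurableSet A}) (f : W), P0 A f = wP A f :=
    fun A f => rfl
  have hP0comp : ∀ A B : {A : Set S // MeasurableSet A},
      (P0 A).comp (P0 B) = P0 (minter A B) := by
    intro A B
    ext f
    rw [ContinuousLinearMap.comp_apply, hP0app, hP0app, hP0app, wP_comp]
  have hP0univ : P0 MU = ContinuousLinearMap.id ℂ W := by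
    ext f
    rw [hP0app, ContinuousLinearMap.id_apply, wP_univ]
  let P : Set S → (Completion W →L[ℂ] Completion W) := fun Aset =>
    if hA : MeasurableSet Aset then cLift (P0 ⟨Aset, hA⟩) else 0
  refine ⟨Completion W, inferInstance, inferInstance, inferInstance, V, P,
    ?_, ?_, ?_, ?_, ?_, ?_⟩
  · -- isometry
    intro h
    rw [hVapp, Completion.norm_coe]
    exact hVnorm h
  · -- selfadjoint
    intro A hA
    show ContinuousLinearMap.adjoint (P A) = P A
    simp only [P]
    rw [dif_pos hA]
    exact cLift_adjoint _ (fun f g => by rw [hP0app, hP0app]; exact hPsa _ f g)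
  · -- idempotent
    intro A hA
    show (P A).comp (P A) = P A
    simp only [P]
    rw [dif_pos hA, cLift_comp, hP0comp, show minter ⟨A, hA⟩ ⟨A, hA⟩ = ⟨A, hA⟩ from
      Subtype.ext (Set.inter_self _)]
  · -- multiplicative
    intro A B hA hB
    show P (A ∩ B) = (P A).comp (P B)
    simp only [P]
    rw [dif_pos hA, dif_pos hB, dif_pos (hA.inter hB), cLift_comp, hP0comp]
    rfl
  · -- identity
    show P Set.univ = ContinuousLinearMap.id ℂ (Completion W)
    simp only [P]
    rw [dif_pos MeasurableSet.univ, show (⟨Set.univ, MeasurableSet.univ⟩ :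
      {A : Set S // MeasurableSet A}) = MU from rfl, hP0univ, cLift_id]
  · -- dilation identity
    intro A hA
    show Q A = ((ContinuousLinearMap.adjoint V).comp (P A)).comp V
    simp only [P]
    rw [dif_pos hA]
    ext h
    refine ext_inner_left ℂ (fun k => ?_)
    rw [ContinuousLinearMap.comp_apply, ContinuousLinearMap.comp_apply,
      ContinuousLinearMap.adjoint_inner_right, hVapp, hVapp, cLift_coe,
      Completion.inner_coe]
    have e1 : P0 ⟨A, hA⟩ (Vc h) = Finsupp.single ⟨A, hA⟩ h := by
      rw [hP0app]
      show wP ⟨A, hA⟩ (Finsupp.single MU h) = _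
      rw [wP_single, show minter ⟨A, hA⟩ MU = ⟨A, hA⟩ from Subtype.ext (Set.inter_univ _)]
    rw [e1]
    show ⟪k, Q A h⟫_ℂ = wInner Q (Finsupp.single MU k) (Finsupp.single ⟨A, hA⟩ h)
    rw [wInner_single_single]
    show _ = ⟪k, Q (Set.univ ∩ A) h⟫_ℂ
    rw [Set.univ_inter]
end

section
/- Let S be a set, L a complex vector space, and for each (s,t) ∈ S × S let B_{s,t} : L × L → ℂ be a sesquilinear form (conjugate-linear in the first argument, linear in the second) such that for every n ∈ ℕ, all s₁,…,sₙ ∈ S and all a₁,…,aₙ ∈ L, the sum ∑_{i,j=1}^n B_{s_i,s_j}(a_i,a_j) is a nonnegative real number. Then there exist a complex Hilbert space 𝓗 and a family of linear maps V_s : L → 𝓗 (s ∈ S) such that B_{s,t}(a,b) = ⟨V_s a, V_t b⟩_𝓗 for all s,t ∈ S and a,b ∈ L; in particular ‖V_s a‖² = B_{s,s}(a,a). -/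
open scoped InnerProductSpace ComplexOrder

section Aux2

variable {L : Type u_1} [AddCommGroup L] [Module ℂ L] {S : Type u_2}
  (B : S → S → L →ₗ⋆[ℂ] L →ₗ[ℂ] ℂ)

/-- the semi-inner-product on the direct sum. -/
noncomputable def stmt14Phi (f g : S →₀ L) : ℂ :=
  f.sum fun s a => g.sum fun t b => B s t a b

theorem stmt14Phi_add_left (f f' g : S →₀ L) :
    stmt14Phi B (f + f') g = stmt14Phi B f g + stmt14Phi B f' g := by
  unfold stmt14Phi
  apply Finsupp.sum_add_index' (fun s => by simp) (fun s a a' => ?_)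
  rw [← Finsupp.sum_add]
  congr 1; ext t b; simp

theorem stmt14Phi_add_right (f g g' : S →₀ L) :
    stmt14Phi B f (g + g') = stmt14Phi B f g + stmt14Phi B f g' := by
  unfold stmt14Phi
  rw [← Finsupp.sum_add]
  congr 1; ext s a
  apply Finsupp.sum_add_index' (fun t => by simp) (fun t b b' => by simp)

theorem stmt14Phi_smul_left (r : ℂ) (f g : S →₀ L) :
    stmt14Phi B (r • f) g = (starRingEnd ℂ) r * stmt14Phi B f g := by
  unfold stmt14Phi
  rw [Finsupp.sum_smul_index' (fun s => by simp)]
  simp only [Finsupp.sum, Finset.mul_sum]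
  refine Finset.sum_congr rfl fun s _ => Finset.sum_congr rfl fun t _ => ?_
  have : B s t (r • f s) = (starRingEnd ℂ) r • B s t (f s) := map_smulₛₗ (B s t) r (f s)
  rw [this]; simp

theorem stmt14Phi_single (s t : S) (a b : L) :
    stmt14Phi B (Finsupp.single s a) (Finsupp.single t b) = B s t a b := by
  unfold stmt14Phi
  rw [Finsupp.sum_single_index (by simp)]
  rw [Finsupp.sum_single_index (by simp)]

theorem stmt14Phi_nonneg
    (hpd : ∀ (n : ℕ) (s : Fin n → S) (a : Fin n → L),
      0 ≤ ∑ i, ∑ j, B (s i) (s j) (a i) (a j)) (f : S →₀ L) :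
    0 ≤ stmt14Phi B f f := by
  classical
  set n := f.support.card
  set e : Fin n ≃ f.support := f.support.equivFin.symm
  have := hpd n (fun i => (e i : S)) (fun i => f (e i))
  refine le_of_le_of_eq this ?_
  have inner_eq : ∀ i : Fin n,
      (∑ j : Fin n, B (e i) (e j) (f (e i)) (f (e j)))
        = ∑ t ∈ f.support, B (e i) t (f (e i)) (f t) := by
    intro i
    rw [← Finset.sum_coe_sort f.support (fun t => B ((e i) : S) t (f (e i)) (f t))]
    exact Equiv.sum_comp e (fun y : f.support => B ((e i) : S) (y : S) (f (e i)) (f y))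
  calc ∑ i : Fin n, ∑ j : Fin n, B (e i) (e j) (f (e i)) (f (e j))
      = ∑ i : Fin n, ∑ t ∈ f.support, B (e i) t (f (e i)) (f t) :=
        Finset.sum_congr rfl fun i _ => inner_eq i
    _ = ∑ s ∈ f.support, ∑ t ∈ f.support, B s t (f s) (f t) := by
        rw [← Finset.sum_coe_sort f.support
          (fun x => ∑ t ∈ f.support, B x t (f x) (f t))]
        exact Equiv.sum_comp e
          (fun x : f.support => ∑ t ∈ f.support, B (x : S) t (f x) (f t))
    _ = stmt14Phi B f f := rfl

end Aux2

section Aux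

variable {L : Type u_1} [AddCommGroup L] [Module ℂ L] {S : Type u_2}
  (B : S → S → L →ₗ⋆[ℂ] L →ₗ[ℂ] ℂ)

/-- Hermitian symmetry of a positive-semidefinite kernel. -/
theorem stmt14_herm (hpd : ∀ (n : ℕ) (s : Fin n → S) (a : Fin n → L),
      0 ≤ ∑ i, ∑ j, B (s i) (s j) (a i) (a j)) (s t : S) (a b : L) :
    (starRingEnd ℂ) (B t s b a) = B s t a b := by
  -- diagonal terms are real
  have hdiag : ∀ (u : S) (c : L), 0 ≤ B u u c c := by
    intro u c
    have := hpd 1 (fun _ => u) (fun _ => c)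
    simpa using this
  have key : ∀ (x y : L), ((B s t x y) + (B t s y x)).im = 0 := by
    intro x y
    have h2 := hpd 2 ![s, t] ![x, y]
    simp [Fin.sum_univ_two] at h2
    have h2im : (B s t x y + B t s y x).im =
        (B s s x x + B s t x y + (B t s y x + B t t y y)).im
          - (B s s x x).im - (B t t y y).im := by
      simp [Complex.add_im]; ring
    have e1 : (B s s x x + B s t x y + (B t s y x + B t t y y)).im = 0 :=
      (Complex.nonneg_iff.mp h2).2.symm ▸ rfl
    have e2 : (B s s x x).im = 0 := ((Complex.nonneg_iff.mp (hdiag s x)).2).symm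
    have e3 : (B t t y y).im = 0 := ((Complex.nonneg_iff.mp (hdiag t y)).2).symm
    rw [h2im, e1, e2, e3]; ring
  have h1 := key a b
  have h2 := key a (Complex.I • b)
  -- B s t a (I•b) = I * B s t a b ; B t s (I•b) a = conj I * B t s b a = -I * B t s b a
  have eA : B s t a (Complex.I • b) = Complex.I * B s t a b := by
    simp
  have eB : B t s (Complex.I • b) a = -Complex.I * (B t s b a) := by
    have : B t s (Complex.I • b) = (starRingEnd ℂ) Complex.I • B t s b := by
      exact map_smulₛₗ (B t s) Complex.I b
    rw [this]
    simp [Complex.conj_I]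
  rw [eA, eB] at h2
  set x := B s t a b
  set y := B t s b a
  have h2' : (Complex.I * x - Complex.I * y).im = 0 := by
    have : Complex.I * x + -Complex.I * y = Complex.I * x - Complex.I * y := by ring
    rwa [this] at h2
  apply Complex.ext
  · -- re y = re x
    have : x.re - y.re = 0 := by
      simpa [Complex.sub_im, Complex.mul_im] using h2'
    simp [Complex.conj_re]; linarith
  · have : x.im + y.im = 0 := by simpa [Complex.add_im] using h1
    simp [Complex.conj_im]; linarith

end Aux

section Aux3

variable {L : Type u_1} [AddCommGroup L] [Module ℂ L] {S : Type u_2}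
  (B : S → S → L →ₗ⋆[ℂ] L →ₗ[ℂ] ℂ)

theorem stmt14Phi_conj
    (hpd : ∀ (n : ℕ) (s : Fin n → S) (a : Fin n → L),
      0 ≤ ∑ i, ∑ j, B (s i) (s j) (a i) (a j)) (f g : S →₀ L) :
    (starRingEnd ℂ) (stmt14Phi B g f) = stmt14Phi B f g := by
  unfold stmt14Phi
  simp only [Finsupp.sum, map_sum]
  rw [Finset.sum_comm]
  exact Finset.sum_congr rfl fun s _ => Finset.sum_congr rfl fun t _ =>
    stmt14_herm B hpd s t (f s) (g t)

end Aux3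

/-- GNS-type factorization: a positive definite family of sesquilinear forms
`(B_{s,t})` on a complex vector space `L` factors through a Hilbert space:
`B_{s,t}(a,b) = ⟨V_s a, V_t b⟩`, and in particular `‖V_s a‖² = B_{s,s}(a,a)`. -/
theorem stmt_14 {L : Type u_1} [AddCommGroup L] [Module ℂ L]
    {S : Type u_2} (B : S → S → L →ₗ⋆[ℂ] L →ₗ[ℂ] ℂ)
    (hpd : ∀ (n : ℕ) (s : Fin n → S) (a : Fin n → L),
      0 ≤ ∑ i, ∑ j, B (s i) (s j) (a i) (a j)) :
    ∃ (𝓗 : Type (max u_1 u_2)) (_ : NormedAddCommGroup 𝓗) (_ : InnerProductSpace ℂ 𝓗)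
      (_ : CompleteSpace 𝓗) (V : S → L →ₗ[ℂ] 𝓗),
      (∀ (s t : S) (a b : L), B s t a b = ⟪V s a, V t b⟫_ℂ) ∧
      (∀ (s : S) (a : L), (‖V s a‖ : ℂ) ^ 2 = B s s a a) := by
  classical
  letI c : PreInnerProductSpace.Core ℂ (S →₀ L) :=
    { inner := stmt14Phi B
      conj_inner_symm := fun f g => stmt14Phi_conj B hpd f g
      re_inner_nonneg := fun f => (Complex.nonneg_iff.mp (stmt14Phi_nonneg B hpd f)).1
      add_left := fun f f' g => stmt14Phi_add_left B f f' g
      smul_left := fun f g r => stmt14Phi_smul_left B r f g }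
  letI : SeminormedAddCommGroup (S →₀ L) := InnerProductSpace.Core.toSeminormedAddCommGroup (𝕜 := ℂ)
  letI : NormedSpace ℂ (S →₀ L) := InnerProductSpace.Core.toNormedSpace (𝕜 := ℂ)
  letI : InnerProductSpace ℂ (S →₀ L) :=
    { inner := c.inner
      norm_sq_eq_re_inner := fun f => Real.sq_sqrt (c.re_inner_nonneg f)
      conj_inner_symm := c.conj_inner_symm
      add_left := c.add_left
      smul_left := c.smul_left }
  let Q := SeparationQuotient (S →₀ L)
  let H := UniformSpace.Completion Q
  let V : S → L →ₗ[ℂ] H := fun s =>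
    (UniformSpace.Completion.toComplL (𝕜 := ℂ) (E := Q)).toLinearMap.comp
      ((SeparationQuotient.mkCLM ℂ (S →₀ L)).toLinearMap.comp (Finsupp.lsingle s))
  have hV : ∀ (s : S) (a : L),
      V s a = ((SeparationQuotient.mk (Finsupp.single s a) : Q) : H) := fun s a => rfl
  have hinner : ∀ (s t : S) (a b : L), B s t a b = ⟪V s a, V t b⟫_ℂ := by
    intro s t a b
    rw [hV, hV, UniformSpace.Completion.inner_coe, SeparationQuotient.inner_mk_mk]
    exact (stmt14Phi_single B s t a b).symm
  refine ⟨H, inferInstance, inferInstance, inferInstance, V, hinner, ?_⟩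
  intro s a
  rw [hinner s s a a]
  exact (inner_self_eq_norm_sq_to_K (𝕜 := ℂ) (V s a)).symm
end

section
/- Let H and L be complex Hilbert spaces with L separable, S a set, V_s : H → L (s ∈ S) bounded linear operators, and K(s,t) := V_s* ∘ V_t. Let (φ_i)_{i∈ℕ} be a Hilbert (orthonormal) basis of L. Let (Ω, 𝓕, ℙ) be a probability space and Z_i : Ω → ℝ (i ∈ ℕ) an independent family of random variables, each with standard Gaussian law N(0,1). Suppose W : S → Ω → H is such that for each t ∈ S and each a ∈ H, for ℙ-almost every ω the series ∑_i Z_i(ω) ⟨a, V_t* φ_i⟩_H converges to ⟨a, W_t(ω)⟩_H, and suppose that for all s,t ∈ S and a,b ∈ H the function ω ↦ ⟨a, W_s(ω)⟩_H ⟨W_t(ω), b⟩_H is integrable. Then E[⟨a, W_s⟩_H ⟨W_t, b⟩_H] = ⟨a, K(s,t) b⟩_H for all s,t ∈ S and a,b ∈ H. -/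
open scoped InnerProductSpace
open MeasureTheory ProbabilityTheory

section Aux

open Real Filter
open scoped ENNReal NNReal Topology

/-! ### Gaussian moment computations -/

lemma gauss_exp_int : ∫ x : ℝ, Real.exp (-(1/2) * x^2) = Real.sqrt (2*π) := by
  rw [integral_gaussian]
  norm_num [mul_comm]

lemma hd1 (x : ℝ) : HasDerivAt (fun x : ℝ => -Real.exp (-(1/2) * x^2))
    (x * Real.exp (-(1/2) * x^2)) x := by
  have h1 : HasDerivAt (fun x : ℝ => -(1/2) * x^2) (-(1/2) * (2*x)) x :=
    ((hasDerivAt_pow 2 x).const_mul _).congr_deriv (by ring)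
  have := (h1.exp).neg
  refine this.congr_deriv ?_
  ring

lemma gauss_m1 : ∫ x : ℝ, x * Real.exp (-(1/2) * x^2) = 0 :=
  integral_eq_zero_of_hasDerivAt_of_integrable hd1
    (integrable_mul_exp_neg_mul_sq (by norm_num))
    ((integrable_exp_neg_mul_sq (by norm_num)).neg)

lemma int_sq_exp : Integrable (fun x : ℝ => x^2 * Real.exp (-(1/2) * x^2)) := by
  have h := integrable_rpow_mul_exp_neg_mul_sq (b := (1/2:ℝ)) (by norm_num) (s := 2) (by norm_num)
  have e : ∀ x : ℝ, x ^ (2:ℝ) = x ^ 2 := fun x => by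
    rw [show (2:ℝ) = ((2:ℕ):ℝ) by norm_num, Real.rpow_natCast]
  simpa [e] using h

lemma hd2 (x : ℝ) : HasDerivAt (fun x : ℝ => -(x * Real.exp (-(1/2) * x^2)))
    (x^2 * Real.exp (-(1/2) * x^2) - Real.exp (-(1/2) * x^2)) x := by
  have h1 : HasDerivAt (fun x : ℝ => -(1/2) * x^2) (-(1/2) * (2*x)) x :=
    ((hasDerivAt_pow 2 x).const_mul _).congr_deriv (by ring)
  have h2 := (hasDerivAt_id x).mul h1.exp
  have := h2.neg
  refine this.congr_deriv ?_
  simp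
  ring

lemma gauss_m2 : ∫ x : ℝ, x^2 * Real.exp (-(1/2) * x^2) = Real.sqrt (2*π) := by
  have h0 : ∫ x : ℝ, (x^2 * Real.exp (-(1/2) * x^2) - Real.exp (-(1/2) * x^2)) = 0 :=
    integral_eq_zero_of_hasDerivAt_of_integrable hd2
      (int_sq_exp.sub (integrable_exp_neg_mul_sq (by norm_num)))
      ((integrable_mul_exp_neg_mul_sq (by norm_num)).neg)
  rw [integral_sub int_sq_exp (integrable_exp_neg_mul_sq (by norm_num)), gauss_exp_int] at h0
  linarith

lemma pdf_eq (x : ℝ) : gaussianPDFReal 0 1 x = (Real.sqrt (2*π))⁻¹ * Real.exp (-(1/2) * x^2) := by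
  simp only [gaussianPDFReal]
  rw [show (2:ℝ)*π*(1:ℝ≥0) = 2*π by norm_num]
  congr 1
  push_cast
  ring

lemma gr_eq : gaussianReal 0 1 = volume.withDensity
    (fun x => ((gaussianPDFReal 0 1 x).toNNReal : ℝ≥0∞)) := by
  rw [gaussianReal_of_var_ne_zero _ one_ne_zero]
  rfl

lemma meas_pdf : Measurable (fun x => (gaussianPDFReal 0 1 x).toNNReal) :=
  (measurable_gaussianPDFReal 0 1).real_toNNReal

lemma gr_integral (g : ℝ → ℝ) :
    ∫ x, g x ∂(gaussianReal 0 1) = ∫ x, gaussianPDFReal 0 1 x * g x := by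
  rw [gr_eq, integral_withDensity_eq_integral_smul meas_pdf]
  congr 1 with x
  simp [NNReal.smul_def, Real.coe_toNNReal _ (gaussianPDFReal_nonneg 0 1 x)]

lemma gr_integrable {g : ℝ → ℝ} (h : Integrable (fun x => gaussianPDFReal 0 1 x * g x)) :
    Integrable g (gaussianReal 0 1) := by
  rw [gr_eq, integrable_withDensity_iff_integrable_smul meas_pdf]
  apply h.congr
  filter_upwards with x
  simp [NNReal.smul_def, Real.coe_toNNReal _ (gaussianPDFReal_nonneg 0 1 x)]

lemma gr_int_sq : Integrable (fun x : ℝ => x ^ 2) (gaussianReal 0 1) := by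
  apply gr_integrable
  have : (fun x : ℝ => gaussianPDFReal 0 1 x * x ^ 2)
      = fun x : ℝ => (Real.sqrt (2*π))⁻¹ * (x ^ 2 * Real.exp (-(1/2) * x^2)) := by
    funext x; rw [pdf_eq]; ring
  rw [this]
  exact int_sq_exp.const_mul _

lemma gr_m1 : ∫ x, x ∂(gaussianReal 0 1) = 0 := by
  rw [gr_integral]
  simp only [pdf_eq]
  rw [show (fun x : ℝ => (Real.sqrt (2*π))⁻¹ * Real.exp (-(1/2)*x^2) * x)
      = (fun x : ℝ => (Real.sqrt (2*π))⁻¹ * (x * Real.exp (-(1/2)*x^2))) from by funext x; ring]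
  rw [integral_const_mul, gauss_m1, mul_zero]

lemma gr_m2 : ∫ x, x ^ 2 ∂(gaussianReal 0 1) = 1 := by
  rw [gr_integral]
  simp only [pdf_eq]
  rw [show (fun x : ℝ => (Real.sqrt (2*π))⁻¹ * Real.exp (-(1/2)*x^2) * x ^ 2)
      = (fun x : ℝ => (Real.sqrt (2*π))⁻¹ * (x ^ 2 * Real.exp (-(1/2)*x^2))) from by
        funext x; ring]
  rw [integral_const_mul, gauss_m2, inv_mul_cancel₀]
  positivity

/-! ### Moments of standard Gaussian random variables -/

variable {Ω : Type*} [MeasurableSpace Ω] {P : Measure Ω} [IsProbabilityMeasure P]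

set_option linter.unusedSectionVars false

lemma Zmem2 {Z : Ω → ℝ} (hm : Measurable Z) (hg : P.map Z = gaussianReal 0 1) :
    MemLp Z 2 P := by
  have h1 : MemLp (id : ℝ → ℝ) 2 (P.map Z) := by
    rw [hg]
    refine (memLp_two_iff_integrable_sq aestronglyMeasurable_id).mpr ?_
    simpa using gr_int_sq
  exact (memLp_map_measure_iff aestronglyMeasurable_id hm.aemeasurable).mp h1

lemma Zm1 {Z : Ω → ℝ} (hm : Measurable Z) (hg : P.map Z = gaussianReal 0 1) :
    ∫ ω, Z ω ∂P = 0 := by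
  have := integral_map (μ := P) hm.aemeasurable (f := (id : ℝ → ℝ)) aestronglyMeasurable_id
  rw [hg] at this
  simpa using this.symm.trans gr_m1

lemma Zm2 {Z : Ω → ℝ} (hm : Measurable Z) (hg : P.map Z = gaussianReal 0 1) :
    ∫ ω, Z ω ^ 2 ∂P = 1 := by
  have := integral_map (μ := P) hm.aemeasurable (f := fun x : ℝ => x ^ 2)
    (continuous_pow 2).aestronglyMeasurable
  rw [hg] at this
  simpa using this.symm.trans gr_m2

lemma ZmemC {Z : Ω → ℝ} (hm : Measurable Z) (hg : P.map Z = gaussianReal 0 1) :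
    MemLp (fun ω => (Z ω : ℂ)) 2 P := by
  have h := Zmem2 hm hg
  refine ⟨(Complex.continuous_ofReal.comp_aestronglyMeasurable h.1), ?_⟩
  have : eLpNorm (fun ω => (Z ω : ℂ)) 2 P = eLpNorm Z 2 P := by
    apply eLpNorm_congr_norm_ae
    filter_upwards with ω
    simp
  rw [this]
  exact h.2

lemma int_mul_toC {Z W : Ω → ℝ} :
    ∫ ω, (Z ω : ℂ) * (W ω : ℂ) ∂P = ((∫ ω, Z ω * W ω ∂P : ℝ) : ℂ) := by
  rw [show (fun ω => (Z ω : ℂ) * (W ω : ℂ)) = fun ω => ((Z ω * W ω : ℝ) : ℂ) from by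
    funext ω; push_cast; ring]
  exact integral_ofReal

lemma Zorth_self {Z : Ω → ℝ} (hmZ : Measurable Z) (hgZ : P.map Z = gaussianReal 0 1) :
    ∫ ω, (Z ω : ℂ) * (Z ω : ℂ) ∂P = 1 := by
  rw [int_mul_toC, show ∫ ω, Z ω * Z ω ∂P = ∫ ω, Z ω ^ 2 ∂P from by
    congr 1; funext ω; ring, Zm2 hmZ hgZ]
  norm_num

lemma Zorth_indep {Z W : Ω → ℝ} (hmZ : Measurable Z) (hmW : Measurable W)
    (hgZ : P.map Z = gaussianReal 0 1) (hgW : P.map W = gaussianReal 0 1)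
    (hind : IndepFun Z W P) :
    ∫ ω, (Z ω : ℂ) * (W ω : ℂ) ∂P = 0 := by
  rw [int_mul_toC, hind.integral_fun_mul_eq_mul_integral hmZ.aestronglyMeasurable hmW.aestronglyMeasurable,
    Zm1 hmZ hgZ]
  norm_num

/-! ### The L² representation lemma -/

lemma coeFn_finset_sum {E : Type*} [NormedAddCommGroup E] {p : ℝ≥0∞}
    {ι : Type*} (s : Finset ι) (f : ι → Lp E p P) :
    ⇑(∑ i ∈ s, f i) =ᵐ[P] fun ω => ∑ i ∈ s, f i ω := by
  classical
  induction s using Finset.induction_on with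
  | empty => simp only [Finset.sum_empty]; exact Lp.coeFn_zero E p P
  | insert a s hnot ih =>
    rw [Finset.sum_insert hnot]
    filter_upwards [Lp.coeFn_add (f a) (∑ i ∈ s, f i), ih] with ω h1 h2
    rw [Finset.sum_insert hnot, h1, Pi.add_apply, h2]

lemma rep_hasSum {Z : ℕ → Ω → ℝ} (hZmeas : ∀ i, Measurable (Z i))
    {ζ : ℕ → Lp ℂ 2 P} (hζ : ∀ i, ⇑(ζ i) =ᵐ[P] fun ω => (Z i ω : ℂ))
    (hζo : Orthonormal ℂ ζ)
    {c : ℕ → ℂ} (hc : Summable (fun i => ‖c i‖^2))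
    {X : Ω → ℂ} (hX2 : MemLp X 2 P)
    (hXae : ∀ᵐ ω ∂P, HasSum (fun i => (Z i ω : ℂ) * c i) (X ω)) :
    HasSum (fun i => c i • ζ i) (hX2.toLp X) := by
  have hsum : Summable (fun i => c i • ζ i) := by
    have h := (hζo.orthogonalFamily.summable_iff_norm_sq_summable (fun i => c i)).mpr (by
      simpa using hc)
    simpa [LinearIsometry.toSpanSingleton_apply] using h
  obtain ⟨ξ, hξ⟩ := hsum
  set Sn : ℕ → Lp ℂ 2 P := fun n => ∑ i ∈ Finset.range n, c i • ζ i with hSn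
  have hten : Tendsto Sn atTop (𝓝 ξ) := hξ.tendsto_sum_nat
  set fn : ℕ → Ω → ℂ := fun n ω => ∑ i ∈ Finset.range n, (Z i ω : ℂ) * c i with hfn
  have hcoe : ∀ n, ⇑(Sn n) =ᵐ[P] fn n := by
    intro n
    refine (coeFn_finset_sum _ _).trans ?_
    have : ∀ᵐ ω ∂P, ∀ i, (ζ i : Ω → ℂ) ω = (Z i ω : ℂ) := ae_all_iff.mpr hζ
    filter_upwards [this, ae_all_iff.mpr fun i => Lp.coeFn_smul (c i) (ζ i)] with ω h1 h2
    rw [hfn]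
    simp only
    refine Finset.sum_congr rfl fun i _ => ?_
    rw [h2 i, Pi.smul_apply, h1 i, smul_eq_mul, mul_comm]
  have heLp : Tendsto (fun n => eLpNorm (fn n - ⇑ξ) 2 P) atTop (𝓝 0) := by
    have h1 := (Lp.tendsto_Lp_iff_tendsto_eLpNorm' Sn ξ).mp hten
    refine h1.congr fun n => ?_
    apply eLpNorm_congr_ae
    filter_upwards [hcoe n] with ω hω
    simp [Pi.sub_apply, hω]
  have hmeasfn : ∀ n, AEStronglyMeasurable (fn n) P := fun n =>
    (Finset.aestronglyMeasurable_fun_sum _ fun i _ =>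
      ((Complex.continuous_ofReal.comp_aestronglyMeasurable
        (hZmeas i).aestronglyMeasurable).mul aestronglyMeasurable_const))
  have htim : TendstoInMeasure P fn atTop ⇑ξ :=
    tendstoInMeasure_of_tendsto_eLpNorm (by norm_num)
      hmeasfn (Lp.aestronglyMeasurable ξ) heLp
  obtain ⟨ns, hns, hae⟩ := htim.exists_seq_tendsto_ae
  have hXeq : ⇑ξ =ᵐ[P] X := by
    filter_upwards [hae, hXae] with ω h1 h2
    have h3 : Tendsto (fun n => fn n ω) atTop (𝓝 (X ω)) := h2.tendsto_sum_nat
    exact tendsto_nhds_unique (h3.comp hns.tendsto_atTop) h1 |>.symm ▸ rfl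
  have : ξ = hX2.toLp X := by
    apply Lp.ext
    exact hXeq.trans (hX2.coeFn_toLp).symm
  rwa [this] at hξ

lemma aemeas_of_hasSum {g : ℕ → Ω → ℂ} (hg : ∀ n, AEStronglyMeasurable (g n) P)
    {X : Ω → ℂ} (h : ∀ᵐ ω ∂P, HasSum (fun i => g i ω) (X ω)) :
    AEStronglyMeasurable X P := by
  refine aestronglyMeasurable_of_tendsto_ae atTop
    (f := fun n ω => ∑ i ∈ Finset.range n, g i ω)
    (fun n => Finset.aestronglyMeasurable_fun_sum _ fun i _ => hg i) ?_
  filter_upwards [h] with ω hω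
  exact hω.tendsto_sum_nat

lemma memL2_conj {X : Ω → ℂ} (h : MemLp X 2 P) :
    MemLp (fun ω => (starRingEnd ℂ) (X ω)) 2 P := by
  refine ⟨Complex.continuous_conj.comp_aestronglyMeasurable h.1, ?_⟩
  have : eLpNorm (fun ω => (starRingEnd ℂ) (X ω)) 2 P = eLpNorm X 2 P := by
    apply eLpNorm_congr_norm_ae
    filter_upwards with ω
    simp
  rw [this]
  exact h.2

end Aux

/-- If `W_t = ∑_i (V_t* φ_i) Z_i` (weakly, a.e.) for i.i.d. standard Gaussians
`Z_i` and a Hilbert basis `(φ_i)` of `L`, then `E[⟨a, W_s⟩ ⟨W_t, b⟩] = ⟨a, K(s,t) b⟩`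
where `K(s,t) = V_s* ∘ V_t`. -/
theorem stmt_15 {H L : Type*} [NormedAddCommGroup H] [InnerProductSpace ℂ H] [CompleteSpace H]
    [NormedAddCommGroup L] [InnerProductSpace ℂ L] [CompleteSpace L]
    {S : Type*} (V : S → H →L[ℂ] L) (K : S → S → H →L[ℂ] H)
    (hK : ∀ s t, K s t = (ContinuousLinearMap.adjoint (V s)).comp (V t))
    (φ : HilbertBasis ℕ ℂ L)
    {Ω : Type*} [MeasurableSpace Ω] (P : Measure Ω) [IsProbabilityMeasure P]
    (Z : ℕ → Ω → ℝ)
    (hZmeas : ∀ i, Measurable (Z i))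
    (hZindep : iIndepFun Z P)
    (hZgauss : ∀ i, P.map (Z i) = gaussianReal 0 1)
    (W : S → Ω → H)
    (hW : ∀ (t : S) (a : H), ∀ᵐ ω ∂P,
      HasSum (fun i : ℕ => (Z i ω : ℂ) * ⟪a, ContinuousLinearMap.adjoint (V t) (φ i)⟫_ℂ)
        (⟪a, W t ω⟫_ℂ))
    (hInt : ∀ (s t : S) (a b : H),
      Integrable (fun ω => (⟪a, W s ω⟫_ℂ) * (⟪W t ω, b⟫_ℂ)) P) :
    ∀ (s t : S) (a b : H),
      ∫ ω, (⟪a, W s ω⟫_ℂ) * (⟪W t ω, b⟫_ℂ) ∂P = ⟪a, K s t b⟫_ℂ := by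
  intro s t a b
  classical
  set c : ℕ → ℂ := fun i => ⟪a, ContinuousLinearMap.adjoint (V s) (φ i)⟫_ℂ with hc_def
  set d : ℕ → ℂ := fun i => ⟪ContinuousLinearMap.adjoint (V t) (φ i), b⟫_ℂ with hd_def
  set X : Ω → ℂ := fun ω => ⟪a, W s ω⟫_ℂ with hX_def
  set Y : Ω → ℂ := fun ω => ⟪W t ω, b⟫_ℂ with hY_def
  have hc_eq : ∀ i, c i = ⟪V s a, φ i⟫_ℂ := fun i => by
    rw [hc_def]; exact (ContinuousLinearMap.adjoint_inner_right _ _ _)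
  have hd_eq : ∀ i, d i = ⟪φ i, V t b⟫_ℂ := fun i =>
    ContinuousLinearMap.adjoint_inner_left _ _ _
  -- summability of coefficients
  have hsumC : ∀ x : L, Summable (fun i => ‖(⟪x, φ i⟫_ℂ : ℂ)‖^2) := by
    intro x
    have h := (φ.hasSum_inner_mul_inner x x).summable
    have h2 : ∀ i, (⟪x, φ i⟫_ℂ) * (⟪φ i, x⟫_ℂ) = ((‖(⟪x, φ i⟫_ℂ : ℂ)‖^2 : ℝ) : ℂ) := by
      intro i
      rw [show (⟪φ i, x⟫_ℂ : ℂ) = (starRingEnd ℂ) (⟪x, φ i⟫_ℂ : ℂ) from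
        (inner_conj_symm (φ i) x).symm, Complex.mul_conj]
      norm_num [Complex.normSq_eq_norm_sq]
    rw [funext h2] at h
    exact Complex.summable_ofReal.mp h
  have hc_sum : Summable (fun i => ‖c i‖^2) := by
    simp_rw [hc_eq]; exact hsumC (V s a)
  have hd_sum : Summable (fun i => ‖d i‖^2) := by
    have := hsumC (V t b)
    refine this.congr fun i => ?_
    rw [hd_eq i, show (⟪φ i, V t b⟫_ℂ : ℂ) = (starRingEnd ℂ) (⟪V t b, φ i⟫_ℂ : ℂ) from
      (inner_conj_symm (φ i) (V t b)).symm]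
    rw [show ‖(starRingEnd ℂ) (⟪V t b, φ i⟫_ℂ : ℂ)‖ = ‖(⟪V t b, φ i⟫_ℂ : ℂ)‖ from by
      rw [Complex.norm_conj]]
  -- target sum
  have hCK : HasSum (fun i => c i * d i) (⟪a, K s t b⟫_ℂ) := by
    have h := φ.hasSum_inner_mul_inner (V s a) (V t b)
    have : (⟪V s a, V t b⟫_ℂ) = ⟪a, K s t b⟫_ℂ := by
      rw [hK]
      simp [ContinuousLinearMap.adjoint_inner_right]
    rw [this] at h
    refine h.congr_fun fun i => by rw [hc_eq i, hd_eq i]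
  -- the orthonormal family in L²
  set ζ : ℕ → Lp ℂ 2 P := fun i => (ZmemC (hZmeas i) (hZgauss i)).toLp _ with hζ_def
  have hζcoe : ∀ i, ⇑(ζ i) =ᵐ[P] fun ω => (Z i ω : ℂ) := fun i =>
    (ZmemC (hZmeas i) (hZgauss i)).coeFn_toLp
  have hζinner : ∀ i j, ⟪ζ i, ζ j⟫_ℂ = if i = j then 1 else 0 := by
    intro i j
    rw [L2.inner_def]
    have : ∫ ω, ⟪(ζ i : Ω → ℂ) ω, (ζ j : Ω → ℂ) ω⟫_ℂ ∂P
        = ∫ ω, (Z i ω : ℂ) * (Z j ω : ℂ) ∂P := by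
      refine integral_congr_ae ?_
      filter_upwards [hζcoe i, hζcoe j] with ω h1 h2
      rw [h1, h2, RCLike.inner_apply]
      simp [Complex.conj_ofReal, mul_comm]
    rw [this]
    by_cases hij : i = j
    · subst hij
      rw [if_pos rfl, Zorth_self (hZmeas i) (hZgauss i)]
    · rw [if_neg hij, Zorth_indep (hZmeas i) (hZmeas j) (hZgauss i) (hZgauss j)
        (hZindep.indepFun hij)]
  have hζo : Orthonormal ℂ ζ := orthonormal_iff_ite.mpr hζinner
  -- the three series representations
  have hXae : ∀ᵐ ω ∂P, HasSum (fun i => (Z i ω : ℂ) * c i) (X ω) := hW s a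
  have hYae : ∀ᵐ ω ∂P, HasSum (fun i => (Z i ω : ℂ) * d i) (Y ω) := by
    filter_upwards [hW t b] with ω hω
    have h := hω.star
    rw [show star (⟪b, W t ω⟫_ℂ : ℂ) = Y ω from inner_conj_symm (W t ω) b] at h
    refine h.congr_fun fun i => ?_
    show (Z i ω : ℂ) * d i
      = star ((Z i ω : ℂ) * ⟪b, ContinuousLinearMap.adjoint (V t) (φ i)⟫_ℂ)
    rw [star_mul', Complex.star_def, Complex.conj_ofReal,
      show (starRingEnd ℂ) (⟪b, ContinuousLinearMap.adjoint (V t) (φ i)⟫_ℂ : ℂ) = d i from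
        inner_conj_symm _ _, mul_comm]
  have hX'ae : ∀ᵐ ω ∂P,
      HasSum (fun i => (Z i ω : ℂ) * (starRingEnd ℂ) (c i)) ((starRingEnd ℂ) (X ω)) := by
    filter_upwards [hW s a] with ω hω
    have h := hω.star
    refine h.congr_fun fun i => ?_
    simp only [star_mul', Complex.star_def, Complex.conj_ofReal]
    rfl
  -- Y is star of ⟪b, W t ·⟫ which is what hasSum converges to; measurability
  have hXmeas : AEStronglyMeasurable X P := by
    refine aemeas_of_hasSum (fun i =>
      (Complex.continuous_ofReal.comp_aestronglyMeasurable
        (hZmeas i).aestronglyMeasurable).mul aestronglyMeasurable_const) hXae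
  have hYmeas : AEStronglyMeasurable Y P := by
    refine aemeas_of_hasSum (fun i =>
      (Complex.continuous_ofReal.comp_aestronglyMeasurable
        (hZmeas i).aestronglyMeasurable).mul aestronglyMeasurable_const) hYae
  -- L² membership
  have hX2 : MemLp X 2 P := by
    refine (memLp_two_iff_integrable_sq_norm hXmeas).mpr ?_
    have h := (hInt s s a a).re
    refine h.congr ?_
    filter_upwards with ω
    simp only [hX_def]
    rw [show (⟪W s ω, a⟫_ℂ : ℂ) = (starRingEnd ℂ) (⟪a, W s ω⟫_ℂ : ℂ) from
      (inner_conj_symm (W s ω) a).symm, Complex.mul_conj]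
    norm_num [Complex.normSq_eq_norm_sq]
    rw [← Complex.ofReal_pow, Complex.ofReal_re]
  have hY2 : MemLp Y 2 P := by
    refine (memLp_two_iff_integrable_sq_norm hYmeas).mpr ?_
    have h := (hInt t t b b).re
    refine h.congr ?_
    filter_upwards with ω
    simp only [hY_def]
    rw [show (⟪b, W t ω⟫_ℂ : ℂ) = (starRingEnd ℂ) (⟪W t ω, b⟫_ℂ : ℂ) from
      (inner_conj_symm b (W t ω)).symm, mul_comm, Complex.mul_conj]
    norm_num [Complex.normSq_eq_norm_sq]
    rw [← Complex.ofReal_pow, Complex.ofReal_re]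
  have hX'2 : MemLp (fun ω => (starRingEnd ℂ) (X ω)) 2 P := memL2_conj hX2
  -- representations in L²
  have hc'_sum : Summable (fun i => ‖(starRingEnd ℂ) (c i)‖^2) := by
    refine hc_sum.congr fun i => ?_
    simp [Complex.norm_conj]
  have hx' : HasSum (fun i => (starRingEnd ℂ) (c i) • ζ i) (hX'2.toLp _) :=
    rep_hasSum hZmeas hζcoe hζo hc'_sum hX'2 hX'ae
  have hy : HasSum (fun i => d i • ζ i) (hY2.toLp Y) :=
    rep_hasSum hZmeas hζcoe hζo hd_sum hY2 hYae
  -- inner products with ζ i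
  have hζy : ∀ i, ⟪ζ i, hY2.toLp Y⟫_ℂ = d i := by
    intro i
    have h1 := (innerSL ℂ (ζ i)).hasSum hy
    have h2 : HasSum (fun j => if j = i then d i else 0) (d i) := hasSum_ite_eq i (d i)
    refine HasSum.unique ?_ h2
    refine h1.congr_fun fun j => ?_
    rw [innerSL_apply_apply, inner_smul_right, hζinner i j]
    by_cases hij : i = j
    · subst hij; simp
    · simp [hij, Ne.symm hij]
  -- compute the full inner product
  have hinner : ⟪hX'2.toLp _, hY2.toLp Y⟫_ℂ = ⟪a, K s t b⟫_ℂ := by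
    rw [← inner_conj_symm (hX'2.toLp _) (hY2.toLp Y)]
    have h1 := (innerSL ℂ (hY2.toLp Y)).hasSum hx'
    have h3 : HasSum (fun i => (starRingEnd ℂ) (c i * d i)) ((starRingEnd ℂ) (⟪a, K s t b⟫_ℂ)) :=
      hCK.star
    have h4 : ⟪hY2.toLp Y, hX'2.toLp _⟫_ℂ = (starRingEnd ℂ) (⟪a, K s t b⟫_ℂ) := by
      refine HasSum.unique ?_ h3
      refine h1.congr_fun fun i => ?_
      rw [innerSL_apply_apply, inner_smul_right,
        show (⟪hY2.toLp Y, ζ i⟫_ℂ : ℂ) = (starRingEnd ℂ) (⟪ζ i, hY2.toLp Y⟫_ℂ : ℂ) from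
          (inner_conj_symm (hY2.toLp Y) (ζ i)).symm, hζy i, map_mul]
    rw [h4, Complex.conj_conj]
  -- identify the integral with the L² inner product
  rw [show (∫ ω, (⟪a, W s ω⟫_ℂ) * (⟪W t ω, b⟫_ℂ) ∂P) = ∫ ω, X ω * Y ω ∂P from rfl,
    ← hinner, L2.inner_def]
  refine integral_congr_ae ?_
  filter_upwards [hX'2.coeFn_toLp, hY2.coeFn_toLp] with ω h1 h2
  rw [h1, h2, RCLike.inner_apply]
  simp only [Complex.conj_conj, mul_comm]
end
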